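/- arXiv:1604.07897 — 11 statements merged into one kernel-verified Lean document; each statement's English description precedes it below -/
import Mathlib

section
/- The number of parking functions of length n equals (n+1)^(n-1). -/
/-!
Pollak's circular argument. Put `n + 1` parking spots on a circle, so that a preference
function is an arbitrary `b : Fin n → ZMod (n + 1)`. Let `G t` be the number of cars preferring
one of the first `t` spots of the circle unrolled to `ℕ`, minus `t`; it drops by exactly `1`
over each period. A rotation `d` turns `b - d` into a parking function iff `G` does not go
below `G d` during the following period, and the first minimiser of `G` is the only such
rotation. Hence the `(n + 1) ^ n` preference functions fall into classes of `n + 1` rotations,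
each containing exactly one parking function.
-/

/-- `a` is a parking function of length `n`: its weakly increasing rearrangement
`b i = a (σ i)` satisfies `b i ≤ i` (with `1`-indexed bound `i`, i.e. `i.val + 1`). -/
def IsParkingFunction (n : ℕ) (a : Fin n → ℕ) : Prop :=
  ∃ σ : Equiv.Perm (Fin n), Monotone (a ∘ σ) ∧ ∀ i : Fin n, a (σ i) ≤ i.val + 1

open Finset

theorem isParkingFunction_iff_card_le {n : ℕ} {a : Fin n → ℕ} :
    IsParkingFunction n a ↔ ∀ k ≤ n, k ≤ #{i | a i ≤ k} := by
  constructor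
  · rintro ⟨σ, -, hσ⟩ k hk
    calc k = #{i : Fin n | i < k} := by rw [Fin.card_filter_val_lt, min_eq_right hk]
      _ ≤ #{i | a i ≤ k} := card_le_card_of_injOn σ
          (fun i hi => by
            simp only [coe_filter, mem_univ, true_and, Set.mem_ofPred_eq] at hi ⊢
            exact (hσ i).trans (by omega))
          σ.injective.injOn
  · intro h
    refine ⟨Tuple.sort a, Tuple.monotone_sort a, fun i => ?_⟩
    by_contra! hi
    have hsmall : #{j | a j ≤ i + 1} ≤ #{j : Fin n | j < (i : ℕ)} := by
      refine card_le_card_of_injOn (Tuple.sort a).symm (fun j hj => ?_)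
        (Tuple.sort a).symm.injective.injOn
      simp only [coe_filter, mem_univ, true_and, Set.mem_ofPred_eq] at hj ⊢
      by_contra! hij
      have := Tuple.monotone_sort a (show i ≤ (Tuple.sort a).symm j from hij)
      simp only [Function.comp_apply, Equiv.apply_symm_apply] at this
      omega
    have := h (i + 1) i.isLt
    rw [Fin.card_filter_val_lt] at hsmall
    omega

theorem IsParkingFunction.le {n : ℕ} {a : Fin n → ℕ} (h : IsParkingFunction n a) (i : Fin n) :
    a i ≤ n := by
  obtain ⟨σ, -, hσ⟩ := h
  simpa using (hσ (σ.symm i)).trans (σ.symm i).isLt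

theorem val_natCast_sub_one_add_sub {m a : ℕ} (ha : 1 ≤ a) (ha' : a ≤ m) (d : ZMod m) :
    (((a - 1 : ℕ) : ZMod m) + d - d).val + 1 = a := by
  rw [add_sub_cancel_right, ZMod.val_cast_of_lt (by omega), Nat.sub_add_cancel ha]

section Circle

variable {m : ℕ} [NeZero m]

theorem card_filter_Ico_natCast_eq (z : ZMod m) (t : ℕ) {k : ℕ} (hk : k ≤ m) :
    #{j ∈ Ico t (t + k) | ((j : ℕ) : ZMod m) = z} = if (z - t).val < k then 1 else 0 := by
  have key : ∀ j ∈ Ico t (t + k), ((j : ZMod m) = z ↔ j = t + (z - t).val) := by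
    intro j hj
    rw [mem_Ico] at hj
    rw [← sub_left_inj (a := (t : ZMod m)), ← Nat.cast_sub hj.1, ← (ZMod.val_injective m).eq_iff,
      ZMod.val_natCast, Nat.mod_eq_of_lt (by omega)]
    omega
  rw [filter_congr key, filter_eq', apply_ite card, card_singleton, card_empty]
  simp

theorem existsUnique_forall_le_add (G : ℕ → ℤ) (hG : ∀ t, G (t + m) = G t - 1) :
    ∃! d : ZMod m, ∀ k < m, G d.val ≤ G (d.val + k) := by
  have no_two_good {s s' : ℕ} (hs : ∀ k < m, G s ≤ G (s + k)) (hs' : ∀ k < m, G s' ≤ G (s' + k))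
      (hlt : s < s') (hlt' : s' < m) : False := by
    have h₁ := hs (s' - s) (by omega)
    have h₂ := hs' (s + m - s') (by omega)
    rw [Nat.add_sub_cancel' hlt.le] at h₁
    rw [show s' + (s + m - s') = s + m by omega, hG] at h₂
    omega
  obtain ⟨t₀, ht₀m, ht₀⟩ := exists_min_image (range m) G ⟨0, mem_range.2 (NeZero.pos m)⟩
  have ht₀' : ∀ s < m, G t₀ ≤ G s := fun s hs => ht₀ s (mem_range.2 hs)
  have hex : ∃ t, ∀ s < m, G t ≤ G s := ⟨t₀, ht₀'⟩
  classical
  set t := Nat.find hex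
  have ht : t < m := (Nat.find_min' hex ht₀').trans_lt (mem_range.1 ht₀m)
  have hfirst (p : ℕ) (hp : p < t) : G t < G p := by
    obtain ⟨s, hs, hsp⟩ := not_forall₂.mp (Nat.find_min hex hp)
    exact (Nat.find_spec hex s hs).trans_lt (not_le.mp hsp)
  have hgood : ∀ k < m, G t ≤ G (t + k) := fun k hk => by
    by_cases htk : t + k < m
    · exact Nat.find_spec hex _ htk
    · have hwrap := hG (t + k - m)
      rw [Nat.sub_add_cancel (by omega)] at hwrap
      have := hfirst (t + k - m) (by omega)
      omega
  refine ⟨t, by simpa only [ZMod.val_cast_of_lt ht] using hgood, fun d hd => ?_⟩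
  rw [← ZMod.natCast_zmod_val d]
  congr 1
  rcases lt_trichotomy d.val t with hlt | heq | hgt
  · exact (no_two_good hd hgood hlt ht).elim
  · exact heq
  · exact (no_two_good hgood hd hgt (ZMod.val_lt d)).elim

variable {ι : Type*} [Fintype ι] (b : ι → ZMod m)

/-- The number of cars preferring one of the first `t` spots of the circle unrolled to `ℕ`. -/
def carsBefore (t : ℕ) : ℕ := ∑ i, #{j ∈ range t | ((j : ℕ) : ZMod m) = b i}

theorem carsBefore_add (t : ℕ) {k : ℕ} (hk : k ≤ m) :
    carsBefore b (t + k) = carsBefore b t + #{i | (b i - t).val < k} := by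
  have hsplit (z : ZMod m) : #{j ∈ range (t + k) | ((j : ℕ) : ZMod m) = z} =
      #{j ∈ range t | ((j : ℕ) : ZMod m) = z} + #{j ∈ Ico t (t + k) | ((j : ℕ) : ZMod m) = z} := by
    simp only [card_filter, sum_range_add_sum_Ico _ (Nat.le_add_right t k)]
  simp only [carsBefore, hsplit, sum_add_distrib, card_filter_Ico_natCast_eq _ _ hk,
    card_filter _ univ]

theorem carsBefore_add_period (t : ℕ) :
    carsBefore b (t + m) = carsBefore b t + Fintype.card ι := by
  rw [carsBefore_add b t le_rfl, filter_true_of_mem (fun i _ => ZMod.val_lt _), card_univ]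

end Circle

theorem existsUnique_isParkingFunction_sub {n : ℕ} (b : Fin n → ZMod (n + 1)) :
    ∃! d : ZMod (n + 1), IsParkingFunction n (fun i => (b i - d).val + 1) := by
  set G : ℕ → ℤ := fun t => carsBefore b t - t
  refine (existsUnique_congr fun d => ?_).2 (existsUnique_forall_le_add G fun t => ?_)
  · simp only [isParkingFunction_iff_card_le, Nat.lt_succ_iff, G]
    refine forall₂_congr fun k hk => ?_
    have := carsBefore_add b d.val (k := k) (by omega)
    simp only [ZMod.natCast_zmod_val, ← Nat.lt_iff_add_one_le] at this ⊢
    omega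
  · simp only [G, carsBefore_add_period, Fintype.card_fin]
    push_cast
    ring

def parkingFunctions (n : ℕ) : Set (Fin n → ℕ) := {a | (∀ i, 1 ≤ a i) ∧ IsParkingFunction n a}

noncomputable def parkingRotationEquiv (n : ℕ) :
    parkingFunctions n × ZMod (n + 1) ≃ (Fin n → ZMod (n + 1)) where
  toFun p i := ((p.1.1 i - 1 : ℕ) : ZMod (n + 1)) + p.2
  invFun b :=
    let d := (existsUnique_isParkingFunction_sub b).choose
    (⟨fun i => (b i - d).val + 1, fun _ => le_add_self,
      (existsUnique_isParkingFunction_sub b).choose_spec.1⟩, d)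
  left_inv := by
    rintro ⟨⟨a, ha_pos, ha⟩, d⟩
    have hval : (fun i => (((a i - 1 : ℕ) : ZMod (n + 1)) + d - d).val + 1) = a :=
      funext fun i => val_natCast_sub_one_add_sub (ha_pos i) ((ha.le i).trans n.le_succ) d
    have hd := (existsUnique_isParkingFunction_sub
      (fun i => ((a i - 1 : ℕ) : ZMod (n + 1)) + d)).unique
      (existsUnique_isParkingFunction_sub _).choose_spec.1 (hval ▸ ha)
    ext : 1
    · apply Subtype.ext
      simp only [hd]
      exact hval
    · exact hd
  right_inv b := by
    funext i
    simp

theorem stmt1_general (n : ℕ) :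
    {a : Fin n → ℕ | (∀ i, 1 ≤ a i) ∧ IsParkingFunction n a}.ncard = (n + 1) ^ (n - 1) := by
  have hcard := Nat.card_congr (parkingRotationEquiv n)
  rw [Nat.card_prod, Nat.card_coe_set_eq, Nat.card_zmod, Nat.card_fun, Nat.card_zmod,
    Nat.card_fin] at hcard
  change (parkingFunctions n).ncard = _
  apply Nat.eq_of_mul_eq_mul_right n.succ_pos
  rw [hcard]
  rcases n with _ | n
  · rfl
  · rw [Nat.add_sub_cancel, pow_succ]

/-- The number of parking functions of length `n` is `(n+1)^(n-1)`. -/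
theorem stmt1 (n : ℕ) (hn : 0 < n) :
    {a : Fin n → ℕ | (∀ i, 1 ≤ a i) ∧ IsParkingFunction n a}.ncard = (n + 1) ^ (n - 1) :=
  stmt1_general n
end

section
/- For every sequence (a_1,...,a_n) ∈ [n+1]^n, exactly one of the n+1 cyclic shifts (a_1+i mod n+1, ..., a_n+i mod n+1), for i = 0,1,...,n (with values taken in [n+1]), is a parking function of length n. -/
/-- The representative of `s` modulo `t` lying in `[t] = {1, …, t}` (for `s ≥ 1`). -/
def modRep (s t : ℕ) : ℕ := (s - 1) % t + 1

/-!
Record the shifted preferences as residues `x j` modulo `n + 1` and consider the walk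
`S m = #{(j, r) | r < m, x j ≡ r} - m`: it rises by the number of cars preferring spot `r` and
falls by one per spot. With `n` cars and `n + 1` spots, `S (m + n + 1) = S m - 1`. A sequence
parks iff, for every `m ≤ n`, at least `m` of its entries are `≤ m`; for the shift by `i` this says
that the walk started at any `u ≡ -i` stays at or above `S u` for the next `n` steps. The first minimum of `S` on `[0, n + 1]` is such a start, and two starts
`u < v < u + n + 1` would give `S u ≤ S v ≤ S (u + n + 1) = S u - 1`.
-/

open Finset

theorem isParkingFunction_iff_le_card {n : ℕ} {b : Fin n → ℕ} :
    IsParkingFunction n b ↔ ∀ m ≤ n, m ≤ #{j | b j ≤ m} := by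
  constructor
  · rintro ⟨σ, -, hσ⟩ m hm
    calc m = #{i : Fin n | i.val < m} := by rw [Fin.card_filter_val_lt, min_eq_right hm]
      _ ≤ #{j | b j ≤ m} := by
        refine card_le_card_of_injOn σ (fun i hi => ?_) σ.injective.injOn
        simp only [coe_filter, mem_univ, true_and, Set.mem_ofPred_eq] at hi ⊢
        exact (hσ i).trans (by omega)
  · intro h
    refine ⟨Tuple.sort b, Tuple.monotone_sort b, fun i => ?_⟩
    by_contra! hi
    have hcard : #{j | b j ≤ i.val + 1} ≤ #{k : Fin n | k.val < i.val} := by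
      refine card_le_card_of_injOn (Tuple.sort b).symm (fun j hj => ?_)
        (Tuple.sort b).symm.injective.injOn
      simp only [coe_filter, mem_univ, true_and, Set.mem_ofPred_eq] at hj ⊢
      by_contra! hik
      have := Tuple.monotone_sort b (Fin.le_def.mpr hik)
      simp only [Function.comp_apply, Equiv.apply_symm_apply] at this
      omega
    have := h (i.val + 1) i.isLt
    rw [Fin.card_filter_val_lt] at hcard
    omega

def IsCycleStart (S : ℕ → ℤ) (p u : ℕ) : Prop := ∀ m < p, S u ≤ S (u + m)

section CycleLemma

variable {S : ℕ → ℤ} {p : ℕ}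

theorem IsCycleStart.add_period_le (hS : ∀ m, S (m + p) = S m - 1) {u v : ℕ}
    (hu : IsCycleStart S p u) (hv : IsCycleStart S p v) (huv : u < v) : u + p ≤ v := by
  by_contra! hvu
  have h₁ := hu (v - u) (by omega)
  have h₂ := hv (u + p - v) (by omega)
  rw [Nat.add_sub_cancel' huv.le] at h₁
  rw [Nat.add_sub_cancel' (by omega), hS] at h₂
  omega

theorem IsCycleStart.eq_of_lt_add_period (hS : ∀ m, S (m + p) = S m - 1) {u v : ℕ}
    (hu : IsCycleStart S p u) (hv : IsCycleStart S p v) (huv : u < v + p) (hvu : v < u + p) :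
    u = v := by
  rcases lt_trichotomy u v with h | h | h
  · exact absurd (hu.add_period_le hS hv h) (by omega)
  · exact h
  · exact absurd (hv.add_period_le hS hu h) (by omega)

theorem exists_isCycleStart (hS : ∀ m, S (m + p) = S m - 1) : ∃ u, IsCycleStart S p u := by
  classical
  have hmin : ∃ u, ∀ v ≤ p, S u ≤ S v := by
    obtain ⟨u, -, hu⟩ := exists_min_image (range (p + 1)) S ⟨0, by simp⟩
    exact ⟨u, fun v hv => hu v (by simpa [Nat.lt_succ_iff] using hv)⟩
  set u := Nat.find hmin
  have hfirst : ∀ v < u, S u < S v := by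
    intro v hv
    obtain ⟨w, hw, hwv⟩ := not_forall₂.mp (Nat.find_min hmin hv)
    exact (Nat.find_spec hmin w hw).trans_lt (not_le.mp hwv)
  refine ⟨u, fun m hm => ?_⟩
  by_cases hwrap : u + m ≤ p
  · exact Nat.find_spec hmin _ hwrap
  · have h := hfirst (u + m - p) (by omega)
    rw [show u + m = u + m - p + p by omega, hS]
    omega

end CycleLemma

section Walk

variable {ι : Type*} [Fintype ι] {p : ℕ} (x : ι → ZMod p)

def cyclicWalk (m : ℕ) : ℤ := ∑ r ∈ range m, (#{j | x j = r} : ℤ) - m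

theorem cyclicWalk_add (u m : ℕ) :
    cyclicWalk x (u + m) =
      cyclicWalk x u + ∑ s ∈ range m, (#{j | x j = ((u + s : ℕ) : ZMod p)} : ℤ) - m := by
  simp only [cyclicWalk, sum_range_add]
  push_cast
  ring

variable [NeZero p]

theorem card_val_add_lt_eq_sum {y : ZMod p} {u m : ℕ} (hyu : y + u = 0) (hm : m ≤ p) :
    #{j | (x j + y).val < m} = ∑ s ∈ range m, #{j | x j = ((u + s : ℕ) : ZMod p)} := by
  rw [card_eq_sum_card_fiberwise (f := fun j => (x j + y).val) (t := range m)
    (fun j hj => by simpa using hj)]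
  refine sum_congr rfl fun s hs => ?_
  have hs : s < m := mem_range.mp hs
  rw [filter_filter]
  congr 1
  refine filter_congr fun j _ => ?_
  calc (x j + y).val < m ∧ (x j + y).val = s ↔ (x j + y).val = s := and_iff_right_of_imp (· ▸ hs)
    _ ↔ x j + y = s :=
      ⟨fun h => by rw [← ZMod.natCast_zmod_val (x j + y), h],
        fun h => by rw [h, ZMod.val_natCast_of_lt (hs.trans_le hm)]⟩
    _ ↔ x j = ((u + s : ℕ) : ZMod p) := by
      push_cast
      constructor <;> intro h
      · linear_combination h - hyu
      · linear_combination h + hyu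

theorem cyclicWalk_le_add_iff {y : ZMod p} {u m : ℕ} (hyu : y + u = 0) (hm : m ≤ p) :
    cyclicWalk x u ≤ cyclicWalk x (u + m) ↔ m ≤ #{j | (x j + y).val < m} := by
  rw [cyclicWalk_add, card_val_add_lt_eq_sum x hyu hm, ← Nat.cast_sum]
  omega

theorem cyclicWalk_add_period (hp : Fintype.card ι + 1 = p) (u : ℕ) :
    cyclicWalk x (u + p) = cyclicWalk x u - 1 := by
  have hwindow : ∑ s ∈ range p, #{j | x j = ((u + s : ℕ) : ZMod p)} = Fintype.card ι := by
    rw [← card_val_add_lt_eq_sum x (neg_add_cancel (u : ZMod p)) le_rfl]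
    simp [ZMod.val_lt]
  rw [cyclicWalk_add, ← Nat.cast_sum, hwindow]
  omega

end Walk

theorem modRep_add_eq_val {s : ℕ} (hs : 1 ≤ s) (i p : ℕ) [NeZero p] :
    modRep (s + i) p = (((s - 1 : ℕ) : ZMod p) + i).val + 1 := by
  rw [← Nat.cast_add, ZMod.val_natCast, modRep, Nat.sub_add_comm hs]

theorem isParkingFunction_modRep_add_iff {n : ℕ} {a : Fin n → ℕ} (ha : ∀ j, 1 ≤ a j)
    {i u : ℕ} (hiu : (i : ZMod (n + 1)) + u = 0) :
    IsParkingFunction n (fun j => modRep (a j + i) (n + 1)) ↔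
      IsCycleStart (cyclicWalk fun j => ((a j - 1 : ℕ) : ZMod (n + 1))) (n + 1) u := by
  have hb : ∀ j m, modRep (a j + i) (n + 1) ≤ m ↔ (((a j - 1 : ℕ) : ZMod (n + 1)) + i).val < m :=
    fun j m => by rw [modRep_add_eq_val (ha j)]; exact Nat.add_one_le_iff
  simp only [isParkingFunction_iff_le_card, hb, IsCycleStart, Nat.lt_succ_iff]
  exact forall₂_congr fun m hm => (cyclicWalk_le_add_iff _ hiu (by omega)).symm

/-- For every `(a 1, …, a n) ∈ [n+1]^n`, exactly one of the `n+1` cyclic shifts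
`(a j + i mod n+1)`, `i = 0, 1, …, n` (values taken in `[n+1]`), is a parking function. -/
theorem stmt2 (n : ℕ) (a : Fin n → ℕ) (ha : ∀ j, a j ∈ Finset.Icc 1 (n + 1)) :
    ∃! i, i ∈ Finset.range (n + 1) ∧
      IsParkingFunction n (fun j => modRep (a j + i) (n + 1)) := by
  have ha₁ : ∀ j, 1 ≤ a j := fun j => (Finset.mem_Icc.mp (ha j)).1
  have hperiod := cyclicWalk_add_period (fun j => ((a j - 1 : ℕ) : ZMod (n + 1))) (by simp)
  -- `n + 1 - i ≡ -i` lies in `[1, n + 1]`, so the starts of two shifts are less than a period apart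
  have hstart : ∀ i < n + 1, IsParkingFunction n (fun j => modRep (a j + i) (n + 1)) →
      IsCycleStart (cyclicWalk fun j => ((a j - 1 : ℕ) : ZMod (n + 1))) (n + 1) (n + 1 - i) :=
    fun i hi => (isParkingFunction_modRep_add_iff ha₁
      (by rw [← Nat.cast_add, Nat.add_sub_cancel' hi.le, ZMod.natCast_self])).mp
  obtain ⟨u, hu⟩ := exists_isCycleStart hperiod
  set i₀ := (-(u : ZMod (n + 1))).val
  have hi₀ : i₀ < n + 1 := ZMod.val_lt _
  have hpf₀ : IsParkingFunction n (fun j => modRep (a j + i₀) (n + 1)) :=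
    (isParkingFunction_modRep_add_iff ha₁ (by simp [i₀])).mpr hu
  refine ⟨i₀, ⟨Finset.mem_range.mpr hi₀, hpf₀⟩, fun i ⟨hi, hpf⟩ => ?_⟩
  rw [Finset.mem_range] at hi
  have := (hstart i hi hpf).eq_of_lt_add_period hperiod (hstart i₀ hi₀ hpf₀) (by omega) (by omega)
  omega
end

section
/- Let r, k, n be positive integers. The number of (r,k)-parking functions of length n equals k(rn+k)^(n-1). -/
/-!
Write `m = rn + k` and encode a parking function `a` by the residues `c i = a i - 1` mod `m`.
Then `a` is an `(r,k)`-parking function iff the lattice path of `c`, which rises by `r` at each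
entry of `c` and falls by `1` at each step, stays strictly above its height `-k` at time `m`.
The path falls by at most one per step and drops by exactly `k` per period, so a period window
contains exactly `k` new lower records; these correspond to the `k` translates `c + t` with the
property (Pollak's cycle lemma). Double counting the pairs `(c, t)` shows that `m` times the number
of parking functions is `k · m ^ n`.
-/

/-- `a` is an `(r,k)`-parking function of length `n`: its weakly increasing rearrangement
`b i = a (σ i)` satisfies `b i ≤ k + (i-1)r` (here `i` is `0`-indexed, so `b i ≤ k + i·r`). -/
def IsRKParkingFunction (r k n : ℕ) (a : Fin n → ℕ) : Prop :=
  ∃ σ : Equiv.Perm (Fin n), Monotone (a ∘ σ) ∧ ∀ i : Fin n, a (σ i) ≤ k + i.val * r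

open Finset

theorem exists_perm_monotone_comp_le_iff {α : Type*} [LinearOrder α] {n : ℕ} (a : Fin n → α)
    {u : ℕ → α} (hu : Monotone u) :
    (∃ σ : Equiv.Perm (Fin n), Monotone (a ∘ σ) ∧ ∀ i : Fin n, a (σ i) ≤ u i) ↔
      ∀ j < n, j + 1 ≤ #{i | a i ≤ u j} := by
  constructor
  · rintro ⟨σ, -, hσ⟩ j hj
    calc j + 1 = #(Iic (⟨j, hj⟩ : Fin n)) := (Fin.card_Iic ⟨j, hj⟩).symm
      _ ≤ #{i | a i ≤ u j} := by
        refine card_le_card_of_injOn σ (fun i hi => ?_) σ.injective.injOn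
        simp only [coe_filter, mem_univ, true_and, Set.mem_ofPred_eq]
        exact (hσ i).trans (hu (Fin.le_def.mp (mem_Iic.mp hi)))
  · intro h
    refine ⟨Tuple.sort a, Tuple.monotone_sort a, fun i => ?_⟩
    by_contra! hi
    have hcard : #{l | a l ≤ u i} ≤ #(Iio i) := by
      refine card_le_card_of_injOn (Tuple.sort a).symm (fun l hl => ?_)
        (Tuple.sort a).symm.injective.injOn
      simp only [coe_filter, mem_univ, true_and, Set.mem_ofPred_eq] at hl
      by_contra! hle
      have := Tuple.monotone_sort a (not_lt.mp (by simpa using hle))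
      simp only [Function.comp_apply, Equiv.apply_symm_apply] at this
      exact (hl.trans_lt hi).not_ge this
    have := h i i.isLt
    rw [Fin.card_Iio] at hcard
    omega

theorem forall_lt_le_apply_iff {r k n : ℕ} (hr : 0 < r) {N : ℕ → ℕ} (hN : Monotone N) :
    (∀ j < n, j + 1 ≤ N (k + j * r)) ↔ ∀ x < r * n + k, x < r * N x + k := by
  constructor
  · intro h x hx
    rcases lt_or_ge x k with hxk | hkx
    · omega
    · obtain ⟨j, s, hs, hx⟩ : ∃ j s, s < r ∧ x = k + j * r + s :=
        ⟨(x - k) / r, (x - k) % r, Nat.mod_lt _ hr, by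
          have := Nat.div_add_mod (x - k) r; rw [Nat.mul_comm] at this; omega⟩
      have hjn : j < n := by
        by_contra! hnj
        nlinarith
      have := Nat.mul_le_mul_left r ((h j hjn).trans (hN (show k + j * r ≤ x by omega)))
      rw [Nat.mul_succ, Nat.mul_comm] at this
      omega
  · intro h j hj
    have := h (k + j * r) (by nlinarith)
    have : j * r < N (k + j * r) * r := by nlinarith
    exact Nat.lt_of_mul_lt_mul_right this

theorem card_mul_card_filter_eq_of_card_filter_add_const {ι A : Type*} [Fintype ι]
    [DecidableEq ι] [AddGroup A] [Fintype A] [DecidableEq A] (P : (ι → A) → Prop)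
    [DecidablePred P] {k : ℕ}
    (h : ∀ c : ι → A, #{t | P fun i => c i + t} = k) :
    Fintype.card A * #{c | P c} = k * Fintype.card A ^ Fintype.card ι := by
  have htrans : ∀ t : A, #{c : ι → A | P fun i => c i + t} = #{c | P c} := fun t =>
    card_equiv (Equiv.addRight (Function.const ι t)) (by simp [Pi.add_def])
  have := sum_comm (s := (univ : Finset (ι → A))) (t := (univ : Finset A))
    (f := fun c t => if P (fun i => c i + t) then 1 else 0)
  simp only [← card_filter, h, htrans, sum_const, card_univ, Fintype.card_fun,
    smul_eq_mul] at this
  rw [← this, mul_comm]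

def IsLowerRecord (G : ℕ → ℤ) (q : ℕ) : Prop := ∀ p < q, G q < G p

instance (G : ℕ → ℤ) : DecidablePred (IsLowerRecord G) :=
  fun q => inferInstanceAs (Decidable (∀ p < q, G q < G p))

def prefixMin (G : ℕ → ℤ) (q : ℕ) : ℤ := (range (q + 1)).inf' nonempty_range_add_one G

section LowerRecords

variable {G : ℕ → ℤ} {m k : ℕ}

theorem prefixMin_succ (G : ℕ → ℤ) (q : ℕ) :
    prefixMin G (q + 1) = min (prefixMin G q) (G (q + 1)) := by
  simp only [prefixMin, range_add_one (n := q + 1), inf'_insert nonempty_range_add_one]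
  exact inf_comm _ _

theorem prefixMin_le {p q : ℕ} (h : p ≤ q) : prefixMin G q ≤ G p :=
  inf'_le G (mem_range.mpr (Nat.lt_succ_of_le h))

theorem exists_le_prefixMin_eq (G : ℕ → ℤ) (q : ℕ) : ∃ p ≤ q, prefixMin G q = G p := by
  obtain ⟨p, hp, h⟩ := exists_mem_eq_inf' nonempty_range_add_one G
  exact ⟨p, Nat.lt_succ_iff.mp (mem_range.mp hp), h⟩

theorem isLowerRecord_succ_iff {q : ℕ} :
    IsLowerRecord G (q + 1) ↔ G (q + 1) < prefixMin G q := by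
  constructor
  · intro h
    obtain ⟨p, hp, hmin⟩ := exists_le_prefixMin_eq G q
    exact hmin ▸ h p (Nat.lt_succ_of_le hp)
  · exact fun h p hp => h.trans_le (prefixMin_le (Nat.lt_succ_iff.mp hp))

/-- A walk whose downward steps are at most `1` hits each new minimum, so every drop of the
prefix minimum by one is a new lower record. -/
theorem card_isLowerRecord_Ioc (hG : ∀ q, G q - 1 ≤ G (q + 1)) (a b : ℕ) :
    (#{q ∈ Ioc a (a + b) | IsLowerRecord G q} : ℤ) = prefixMin G a - prefixMin G (a + b) := by
  induction b with
  | zero => simp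
  | succ b ih =>
    have hIoc : Ioc a (a + (b + 1)) = insert (a + b + 1) (Ioc a (a + b)) := by
      rw [← add_assoc, insert_Ioc_right_eq_Ioc_add_one (by omega)]
    have hnot : a + b + 1 ∉ Ioc a (a + b) := by simp
    rw [hIoc, filter_insert, ← add_assoc, prefixMin_succ]
    have hstep := hG (a + b)
    have hle := prefixMin_le (G := G) (le_refl (a + b))
    split_ifs with hrec
    · rw [card_insert_of_notMem (fun h => hnot (mem_of_mem_filter _ h))]
      have := isLowerRecord_succ_iff.mp hrec
      push_cast
      omega
    · have := isLowerRecord_succ_iff.not.mp hrec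
      omega

theorem prefixMin_add_period (hper : ∀ q, G (q + m) = G q - k) {q : ℕ} (hq : m ≤ q + 1) :
    prefixMin G (q + m) = prefixMin G q - k := by
  apply le_antisymm
  · obtain ⟨p, hp, hmin⟩ := exists_le_prefixMin_eq G q
    calc prefixMin G (q + m) ≤ G (p + m) := prefixMin_le (by omega)
      _ = prefixMin G q - k := by rw [hper, hmin]
  · obtain ⟨p, hp, hmin⟩ := exists_le_prefixMin_eq G (q + m)
    rw [hmin]
    rcases le_or_gt p q with hpq | hqp
    · have := prefixMin_le (G := G) hpq
      omega
    · obtain ⟨p', rfl⟩ : ∃ p', p = p' + m := ⟨p - m, by omega⟩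
      rw [hper]
      have := prefixMin_le (G := G) (show p' ≤ q by omega)
      omega

theorem card_isLowerRecord_period (hG : ∀ q, G q - 1 ≤ G (q + 1))
    (hper : ∀ q, G (q + m) = G q - k) :
    #{q ∈ Ioc (m - 1) (m - 1 + m) | IsLowerRecord G q} = k := by
  have := card_isLowerRecord_Ioc hG (m - 1) m
  rw [prefixMin_add_period hper (by omega)] at this
  omega

theorem isLowerRecord_add_period_iff (hk : 0 < k) (hper : ∀ q, G (q + m) = G q - k) (j : ℕ) :
    IsLowerRecord G (j + m) ↔ ∀ x < m, G (j + m) < G (j + x) := by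
  refine ⟨fun h x hx => h _ (by omega), fun h => ?_⟩
  have hm : 0 < m := Nat.pos_of_ne_zero fun h0 => by have := hper 0; simp [h0] at this; omega
  suffices ∀ d p, p + d = j + m → 0 < d → G (j + m) < G p from
    fun p hp => this (j + m - p) p (by omega) (by omega)
  intro d
  induction d using Nat.strong_induction_on with
  | _ d ih =>
    intro p hpd hd
    rcases le_or_gt d m with hdm | hmd
    · simpa [show j + (m - d) = p by omega] using h (m - d) (by omega)
    · have := ih (d - m) (by omega) (p + m) (by omega) (by omega)
      rw [hper p] at this
      omega

end LowerRecords

section Walk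

variable {n m : ℕ} (r : ℕ)

/-- The lattice path of `c`, defined for all times so that it is periodic up to its drift
`rn - m`. -/
def walk (c : Fin n → ZMod m) (x : ℕ) : ℤ :=
  ∑ j ∈ range x, ((r : ℤ) * #{i | c i = j} - 1)

theorem walk_sub_one_le_walk_succ (c : Fin n → ZMod m) (x : ℕ) :
    walk r c x - 1 ≤ walk r c (x + 1) := by
  rw [walk, walk, sum_range_succ]
  have : (0 : ℤ) ≤ r * #{i | c i = x} := by positivity
  linarith

variable [NeZero m]

theorem walk_eq_of_le (c : Fin n → ZMod m) {x : ℕ} (hx : x ≤ m) :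
    walk r c x = r * #{i | (c i).val < x} - x := by
  have hfib : #{i | (c i).val < x} = ∑ j ∈ range x, #{i | c i = j} := by
    rw [card_eq_sum_card_fiberwise (f := fun i => (c i).val) (t := range x)
      (fun i hi => by simpa using hi)]
    refine sum_congr rfl fun j hj => ?_
    rw [filter_filter]
    refine congrArg card (filter_congr fun i _ => ?_)
    have hjm : j < m := (mem_range.mp hj).trans_le hx
    constructor
    · rintro ⟨-, rfl⟩
      exact (ZMod.natCast_zmod_val _).symm
    · intro h
      rw [h, ZMod.val_natCast_of_lt hjm]
      exact ⟨mem_range.mp hj, rfl⟩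
  rw [walk, hfib, sum_sub_distrib, ← mul_sum]
  simp

theorem walk_add_period {k : ℕ} (hm : m = r * n + k) (c : Fin n → ZMod m) (x : ℕ) :
    walk r c (x + m) = walk r c x - k := by
  have hperiod : walk r c m = -k := by
    rw [walk_eq_of_le r c le_rfl]
    have hmz : (m : ℤ) = r * n + k := by exact_mod_cast hm
    simp [ZMod.val_lt, hmz]
  rw [add_comm x, walk, sum_range_add, ← walk, hperiod]
  simp [walk, sub_eq_neg_add]

theorem walk_add_const (c : Fin n → ZMod m) (t : ZMod m) (x : ℕ) :
    walk r (fun i => c i + t) x = walk r c ((-t).val + x) - walk r c (-t).val := by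
  unfold walk
  rw [sum_range_add, add_sub_cancel_left]
  refine sum_congr rfl fun j _ => ?_
  congr 3
  refine congrArg card (filter_congr fun i _ => ?_)
  rw [Nat.cast_add, ZMod.natCast_zmod_val, ← eq_sub_iff_add_eq, sub_eq_neg_add]

end Walk

section Cycle

variable {n m k : ℕ} [NeZero m] (r : ℕ)

theorem isLowerRecord_walk_iff (hm : m = r * n + k) (c : Fin n → ZMod m) :
    IsLowerRecord (walk r c) m ↔ ∀ x < m, x < r * #{i | (c i).val < x} + k := by
  refine forall₂_congr fun x hx => ?_
  have hcard : #{i | (c i).val < m} = n := by simp [ZMod.val_lt]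
  have hmz : (m : ℤ) = r * n + k := by exact_mod_cast hm
  rw [walk_eq_of_le r c le_rfl, walk_eq_of_le r c hx.le, hcard, hmz]
  omega

theorem isLowerRecord_walk_add_const_iff (hk : 0 < k) (hm : m = r * n + k)
    (c : Fin n → ZMod m) (t : ZMod m) :
    IsLowerRecord (walk r fun i => c i + t) m ↔ IsLowerRecord (walk r c) ((-t).val + m) := by
  rw [isLowerRecord_add_period_iff hk (walk_add_period r hm c)]
  simp only [IsLowerRecord, walk_add_const, sub_lt_sub_iff_right]

theorem card_isLowerRecord_walk_add_const (hk : 0 < k) (hm : m = r * n + k)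
    (c : Fin n → ZMod m) : #{t : ZMod m | IsLowerRecord (walk r fun i => c i + t) m} = k := by
  rw [← card_isLowerRecord_period (walk_sub_one_le_walk_succ r c) (walk_add_period r hm c)]
  refine card_nbij' (fun t => (-t).val + m) (fun q => -((q - m : ℕ) : ZMod m)) ?_ ?_ ?_ ?_
  · intro t ht
    simp only [coe_filter, mem_univ, true_and, Set.mem_ofPred_eq, mem_Ioc] at ht ⊢
    exact ⟨⟨by omega, by have := ZMod.val_lt (-t); omega⟩,
      (isLowerRecord_walk_add_const_iff r hk hm c t).mp ht⟩
  · intro q hq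
    simp only [coe_filter, mem_univ, true_and, Set.mem_ofPred_eq, mem_Ioc] at hq ⊢
    rw [isLowerRecord_walk_add_const_iff r hk hm, neg_neg, ZMod.val_natCast_of_lt (by omega),
      Nat.sub_add_cancel (by omega)]
    exact hq.2
  · intro t _
    simp
  · intro q hq
    simp only [coe_filter, Set.mem_ofPred_eq, mem_Ioc] at hq
    simp only [neg_neg]
    rw [ZMod.val_natCast_of_lt (by omega)]
    omega

end Cycle

theorem card_isLowerRecord_walk {r k n m : ℕ} [NeZero m] (hk : 0 < k) (hm : m = r * n + k) :
    m * #{c : Fin n → ZMod m | IsLowerRecord (walk r c) m} = k * m ^ n := by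
  simpa using card_mul_card_filter_eq_of_card_filter_add_const
    (fun c : Fin n → ZMod m => IsLowerRecord (walk r c) m)
    fun c => card_isLowerRecord_walk_add_const r hk hm c

theorem isRKParkingFunction_iff {r k n : ℕ} (hr : 0 < r) (a : Fin n → ℕ) :
    IsRKParkingFunction r k n a ↔ ∀ x < r * n + k, x < r * #{i | a i ≤ x} + k := by
  have hbound : Monotone fun j => k + j * r := fun _ _ h => by dsimp only; gcongr
  have hcount : Monotone fun x => #{i | a i ≤ x} := fun _ _ h =>
    card_le_card <| monotone_filter_right _ fun _ _ hi => le_trans hi h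
  exact (exists_perm_monotone_comp_le_iff a hbound).trans (forall_lt_le_apply_iff hr hcount)

theorem setOf_isRKParkingFunction_eq_image {r k n m : ℕ} [NeZero m] (hr : 0 < r)
    (hm : m = r * n + k) :
    {a : Fin n → ℕ | (∀ i, 1 ≤ a i) ∧ IsRKParkingFunction r k n a} =
      (fun (c : Fin n → ZMod m) i => (c i).val + 1) '' {c | IsLowerRecord (walk r c) m} := by
  ext a
  simp only [Set.mem_ofPred_eq, Set.mem_image, isLowerRecord_walk_iff r hm]
  constructor
  · rintro ⟨hpos, hpark⟩
    have hlt : ∀ i, a i - 1 < m := by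
      obtain ⟨σ, -, hσ⟩ := hpark
      intro i
      have := hσ (σ.symm i)
      simp only [Equiv.apply_symm_apply] at this
      have := Nat.mul_le_mul_right r (σ.symm i).isLt
      rw [Nat.succ_mul, Nat.mul_comm n r] at this
      omega
    have hval (i) : ((a i - 1 : ℕ) : ZMod m).val = a i - 1 := ZMod.val_natCast_of_lt (hlt i)
    refine ⟨fun i => (a i - 1 : ℕ), ?_, funext fun i => by rw [hval]; have := hpos i; omega⟩
    rw [isRKParkingFunction_iff hr] at hpark
    intro x hx
    convert hpark x (hm ▸ hx) using 4
    refine filter_congr fun i _ => ?_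
    rw [hval]
    have := hpos i
    omega
  · rintro ⟨c, hc, rfl⟩
    exact ⟨fun i => Nat.le_add_left 1 _,
      (isRKParkingFunction_iff hr _).mpr fun x hx => hc x (hm ▸ hx)⟩

/-- The number of `(r,k)`-parking functions of length `n` is `k(rn+k)^(n-1)`. -/
theorem stmt3 (r k n : ℕ) (hr : 0 < r) (hk : 0 < k) (hn : 0 < n) :
    {a : Fin n → ℕ | (∀ i, 1 ≤ a i) ∧ IsRKParkingFunction r k n a}.ncard
      = k * (r * n + k) ^ (n - 1) := by
  set m := r * n + k with hm
  have hm0 : 0 < m := by omega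
  have : NeZero m := ⟨hm0.ne'⟩
  have hinj : Function.Injective fun (c : Fin n → ZMod m) i => (c i).val + 1 :=
    fun c c' h => funext fun i => ZMod.val_injective m (Nat.succ_injective (congrFun h i))
  rw [setOf_isRKParkingFunction_eq_image hr hm, Set.ncard_image_of_injective _ hinj,
    Set.ncard_eq_toFinset_card', Set.toFinset_ofPred]
  refine Nat.eq_of_mul_eq_mul_left hm0 ?_
  rw [card_isLowerRecord_walk hk hm, ← mul_pow_sub_one hn.ne']
  ring
end

section
/- Let r, k, n be positive integers and set N = rn + k. Define two elements α, β of [N]^n to be equivalent if β is obtained from α by adding a constant multiple of (1,1,...,1) modulo N (with values in [N]). Then each equivalence class has exactly N elements, and each equivalence class contains exactly k (r,k)-parking functions. -/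
open Finset

section Aux

variable {n : ℕ}

/-- Unrolled counting function. -/
def Pfun (N : ℕ) (α : Fin n → ℕ) (t : ℕ) : ℕ := ∑ j, (α j - 1 + t) / N

/-- The profile function `T t = r * P t - t`. -/
def Tfun (r N : ℕ) (α : Fin n → ℕ) (t : ℕ) : ℤ := (r : ℤ) * Pfun N α t - t

lemma Pfun_mono (N : ℕ) (α : Fin n → ℕ) : Monotone (Pfun N α) := by
  intro s t hst
  exact Finset.sum_le_sum fun j _ => Nat.div_le_div_right (by omega)

lemma Pfun_shift (N : ℕ) (hN : 0 < N) (α : Fin n → ℕ) (t : ℕ) :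
    Pfun N α (t + N) = Pfun N α t + n := by
  unfold Pfun
  have h : ∀ j : Fin n, (α j - 1 + (t + N)) / N = (α j - 1 + t) / N + 1 := by
    intro j
    rw [← add_assoc, Nat.add_div_right _ hN]
  simp only [h, Finset.sum_add_distrib, Finset.sum_const, card_univ, Fintype.card_fin,
    smul_eq_mul, mul_one]

lemma Tfun_shift {r k : ℕ} (N : ℕ) (hNpos : 0 < N) (hN : N = r * n + k) (α : Fin n → ℕ)
    (t : ℕ) : Tfun r N α (t + N) = Tfun r N α t - k := by
  unfold Tfun
  rw [Pfun_shift N hNpos]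
  have hcast : (N : ℤ) = r * n + k := by exact_mod_cast hN
  push_cast
  linear_combination -hcast

lemma Tfun_step (r N : ℕ) (α : Fin n → ℕ) (t : ℕ) :
    Tfun r N α t - 1 ≤ Tfun r N α (t + 1) := by
  have h := Pfun_mono N α (Nat.le_succ t)
  unfold Tfun
  have h2 : (r : ℤ) * Pfun N α t ≤ (r : ℤ) * Pfun N α (t + 1) := by
    apply mul_le_mul_of_nonneg_left (by exact_mod_cast h) (by positivity)
  push_cast
  linarith

lemma div_indicator (N a c m : ℕ) (hN : 0 < N) (ha1 : 1 ≤ a) (haN : a ≤ N) (hm : m ≤ N) :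
    (a - 1 + (c + N)) / N
      = (a - 1 + (c + N - m)) / N + (if modRep (a + c) N ≤ m then 1 else 0) := by
  have hmr : modRep (a + c) N = (a - 1 + c) % N + 1 := by
    unfold modRep
    congr 2
    omega
  set q := (a - 1 + c) / N with hq
  set s := (a - 1 + c) % N with hs
  have hslt : s < N := Nat.mod_lt _ hN
  have hqs : a - 1 + c = N * q + s := (Nat.div_add_mod _ _).symm
  have hL : a - 1 + (c + N) = s + N + N * q := by omega
  have hR : a - 1 + (c + N - m) = s + (N - m) + N * q := by omega
  rw [hL, hR, Nat.add_mul_div_left _ _ hN, Nat.add_mul_div_left _ _ hN, hmr]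
  rcases Nat.lt_or_ge s m with h | h
  · have h1 : (s + N) / N = 1 := by
      rw [Nat.add_div_right _ hN, Nat.div_eq_of_lt hslt]
    have h2 : (s + (N - m)) / N = 0 := Nat.div_eq_of_lt (by omega)
    rw [h1, h2, if_pos (by omega)]
    omega
  · have h1 : (s + N) / N = 1 := by
      rw [Nat.add_div_right _ hN, Nat.div_eq_of_lt hslt]
    have h2 : (s + (N - m)) / N = 1 := by
      have : s + (N - m) = (s - m) + N := by omega
      rw [this, Nat.add_div_right _ hN, Nat.div_eq_of_lt (by omega)]
    rw [h1, h2, if_neg (by omega)]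
    omega

lemma bridge (N : ℕ) (hN : 0 < N) (α : Fin n → ℕ) (hα : ∀ j, α j ∈ Finset.Icc 1 N)
    (c m : ℕ) (hm : m ≤ N) :
    ((univ : Finset (Fin n)).filter (fun j => modRep (α j + c) N ≤ m)).card
      + Pfun N α (c + N - m) = Pfun N α (c + N) := by
  rw [Finset.card_filter]
  unfold Pfun
  rw [← Finset.sum_add_distrib]
  apply Finset.sum_congr rfl
  intro j _
  have h := hα j
  rw [Finset.mem_Icc] at h
  rw [div_indicator N (α j) c m hN h.1 h.2 hm]
  omega

/-- Characterization of `(r,k)`-parking functions by counting. -/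
lemma park_iff {r k N : ℕ} (hr : 0 < r) (hk : 0 < k) (hn : 0 < n) (hN : N = r * n + k)
    (β : Fin n → ℕ) :
    IsRKParkingFunction r k n β ↔
      ∀ m, 1 ≤ m → m + 1 ≤ N →
        m + 1 ≤ r * ((univ : Finset (Fin n)).filter (fun j => β j ≤ m)).card + k := by
  constructor
  · rintro ⟨σ, hmono, hbd⟩ m hm1 hmN
    rcases Nat.lt_or_ge m k with h | h
    · omega
    · obtain ⟨d, rfl⟩ : ∃ d, m = k + d := ⟨m - k, by omega⟩
      have hi : d / r < n := by
        rw [Nat.div_lt_iff_lt_mul hr]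
        nlinarith
      set I : Fin n := ⟨d / r, hi⟩ with hI
      have hsub : (Finset.Iic I).image σ ⊆
          (univ : Finset (Fin n)).filter (fun j => β j ≤ k + d) := by
        intro j hj
        rw [Finset.mem_image] at hj
        obtain ⟨t, ht, rfl⟩ := hj
        rw [Finset.mem_Iic] at ht
        rw [Finset.mem_filter]
        refine ⟨Finset.mem_univ _, ?_⟩
        have h1 : β (σ t) ≤ β (σ I) := hmono ht
        have h2 : β (σ I) ≤ k + (d / r) * r := hbd I
        have h3 : (d / r) * r ≤ d := Nat.div_mul_le_self d r
        omega
      have hcard : d / r + 1 ≤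
          ((univ : Finset (Fin n)).filter (fun j => β j ≤ k + d)).card := by
        calc d / r + 1 = (Finset.Iic I).card := (Fin.card_Iic I).symm
          _ = ((Finset.Iic I).image σ).card :=
              (Finset.card_image_of_injective _ σ.injective).symm
          _ ≤ _ := Finset.card_le_card hsub
      have hmul : r * (d / r + 1) ≤
          r * ((univ : Finset (Fin n)).filter (fun j => β j ≤ k + d)).card :=
        Nat.mul_le_mul_left r hcard
      have hdm : r * (d / r) + d % r = d := Nat.div_add_mod d r
      have hmod : d % r < r := Nat.mod_lt _ hr
      have hexp : r * (d / r + 1) = r * (d / r) + r := by ring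
      omega
  · intro h
    refine ⟨Tuple.sort β, Tuple.monotone_sort β, ?_⟩
    intro i
    by_contra hcon
    push_neg at hcon
    set σ := Tuple.sort β with hσ
    set m := k + i.val * r with hm
    have hm1 : 1 ≤ m := by omega
    have hmul0 : (i.val + 1) * r ≤ n * r := Nat.mul_le_mul_right r i.isLt
    have hexp0 : (i.val + 1) * r = i.val * r + r := by ring
    have hmN : m + 1 ≤ N := by
      have : i.val * r + r ≤ n * r := by omega
      have h2 : n * r = r * n := Nat.mul_comm n r
      omega
    have hcount := h m hm1 hmN
    -- the filter has at most i.val elements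
    have hsub : (univ : Finset (Fin n)).filter (fun j => β j ≤ m) ⊆
        (Finset.Iio i).image σ := by
      intro j hj
      rw [Finset.mem_filter] at hj
      rw [Finset.mem_image]
      refine ⟨σ.symm j, ?_, by simp⟩
      rw [Finset.mem_Iio]
      by_contra hge
      push_neg at hge
      have h1 : β (σ i) ≤ β (σ (σ.symm j)) := Tuple.monotone_sort β hge
      rw [Equiv.apply_symm_apply] at h1
      omega
    have hcard : ((univ : Finset (Fin n)).filter (fun j => β j ≤ m)).card ≤ i.val := by
      calc _ ≤ ((Finset.Iio i).image σ).card := Finset.card_le_card hsub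
        _ = (Finset.Iio i).card := Finset.card_image_of_injective _ σ.injective
        _ = i.val := Fin.card_Iio i
    have hmul : r * ((univ : Finset (Fin n)).filter (fun j => β j ≤ m)).card
        ≤ r * i.val := Nat.mul_le_mul_left r hcard
    have hexp : r * i.val = i.val * r := Nat.mul_comm r i.val
    omega

/-- The shifted sequence is a parking function iff `c` is a "good" index for `T`. -/
lemma good_iff {r k N : ℕ} (hr : 0 < r) (hk : 0 < k) (hn : 0 < n) (hN : N = r * n + k)
    (α : Fin n → ℕ) (hα : ∀ j, α j ∈ Finset.Icc 1 N) (c : ℕ) :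
    IsRKParkingFunction r k n (fun j => modRep (α j + c) N) ↔
      ∀ t, c < t → t < c + N → Tfun r N α t < Tfun r N α c := by
  have hNpos : 0 < N := by omega
  rw [park_iff hr hk hn hN]
  have hshift := Tfun_shift (k := k) N hNpos hN α c
  constructor
  · intro h t ht1 ht2
    set m := c + N - t with hmdef
    have hm1 : 1 ≤ m := by omega
    have hmN : m + 1 ≤ N := by omega
    have hineq := h m hm1 hmN
    have hb := bridge N hNpos α hα c m (by omega)
    have htm : c + N - m = t := by omega
    rw [htm] at hb
    set f := ((univ : Finset (Fin n)).filter (fun j => modRep (α j + c) N ≤ m)).card with hf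
    have hE : (f : ℤ) + Pfun N α t = Pfun N α (c + N) := by exact_mod_cast hb
    have hE' : (r : ℤ) * Pfun N α t = r * Pfun N α (c + N) - r * f := by
      linear_combination (r : ℤ) * hE
    have hineq' : (m : ℤ) + 1 ≤ r * f + k := by exact_mod_cast hineq
    have hmz : (m : ℤ) = c + N - t := by omega
    unfold Tfun at hshift ⊢
    push_cast at hshift ⊢
    linarith
  · intro h m hm1 hmN
    set t := c + N - m with htdef
    have ht1 : c < t := by omega
    have ht2 : t < c + N := by omega
    have hineq := h t ht1 ht2
    have hb := bridge N hNpos α hα c m (by omega)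
    have htm : c + N - m = t := rfl
    rw [htm] at hb
    set f := ((univ : Finset (Fin n)).filter (fun j => modRep (α j + c) N ≤ m)).card with hf
    have hE : (f : ℤ) + Pfun N α t = Pfun N α (c + N) := by exact_mod_cast hb
    have hE' : (r : ℤ) * Pfun N α t = r * Pfun N α (c + N) - r * f := by
      linear_combination (r : ℤ) * hE
    have hmz : (m : ℤ) = c + N - t := by omega
    unfold Tfun at hshift hineq
    have goal' : (m : ℤ) + 1 ≤ r * f + k := by
      push_cast at hshift hineq ⊢
      linarith
    exact_mod_cast goal'

/-- A good index beats all later values of `T`, not just those in its window. -/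
lemma good_ext {r k N : ℕ} (hk : 0 < k) (hNpos : 0 < N) (hN : N = r * n + k)
    (α : Fin n → ℕ) (c : ℕ)
    (hgood : ∀ t, c < t → t < c + N → Tfun r N α t < Tfun r N α c) :
    ∀ t, c < t → Tfun r N α t < Tfun r N α c := by
  intro t
  induction t using Nat.strong_induction_on with
  | _ t ih =>
    intro ht
    rcases Nat.lt_or_ge t (c + N) with h | h
    · exact hgood t ht h
    · have hts : t = (t - N) + N := by omega
      have hshift : Tfun r N α t = Tfun r N α (t - N) - k := by
        have h0 := Tfun_shift (k := k) N hNpos hN α (t - N)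
        rw [← hts] at h0
        exact h0
      rcases Nat.lt_or_ge c (t - N) with h2 | h2
      · have := ih (t - N) (by omega) h2
        omega
      · have hc : t - N = c := by omega
        rw [hc] at hshift
        omega

open Classical in
/-- Exactly `k` of the `N` shifts are good. -/
lemma count_good {r k N : ℕ} (hr : 0 < r) (hk : 0 < k) (hn : 0 < n) (hN : N = r * n + k)
    (α : Fin n → ℕ) :
    ((Finset.range N).filter
      (fun c => ∀ t, c < t → t < c + N → Tfun r N α t < Tfun r N α c)).card = k := by
  have hNpos : 0 < N := by omega
  set T := Tfun r N α with hT
  have hTshift : ∀ t, T (t + N) = T t - k := fun t => Tfun_shift (k := k) N hNpos hN α t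
  have hTstep : ∀ t, T t - 1 ≤ T (t + 1) := fun t => Tfun_step r N α t
  -- the maximum of T over [0, N)
  have hne : ((Finset.range N).image T).Nonempty := by
    refine ⟨T 0, Finset.mem_image_of_mem T ?_⟩
    simp [hNpos]
  set M := ((Finset.range N).image T).max' hne with hM
  have hM1 : ∀ t, t < N → T t ≤ M := fun t ht =>
    Finset.le_max' _ _ (Finset.mem_image_of_mem T (Finset.mem_range.mpr ht))
  obtain ⟨t0, ht0N, ht0⟩ : ∃ t0, t0 < N ∧ T t0 = M := by
    have := Finset.max'_mem _ hne
    rw [Finset.mem_image] at this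
    obtain ⟨t0, ht0, h⟩ := this
    exact ⟨t0, Finset.mem_range.mp ht0, h⟩
  have hM3 : ∀ t, N ≤ t → t < 2 * N → T t ≤ M - k := by
    intro t h1 h2
    have hts : t = (t - N) + N := by omega
    have := hTshift (t - N)
    rw [← hts] at this
    have := hM1 (t - N) (by omega)
    omega
  rw [show k = (Finset.Ioc (M - k) M).card by rw [Int.card_Ioc]; omega]
  apply Finset.card_bij (fun c _ => T c)
  · -- maps into Ioc
    intro c hc
    rw [Finset.mem_filter, Finset.mem_range] at hc
    obtain ⟨hcN, hgood⟩ := hc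
    rw [Finset.mem_Ioc]
    constructor
    · have hext := good_ext (k := k) hk hNpos hN α c hgood
      have h1 : T c > T (t0 + N) := hext (t0 + N) (by omega)
      have h2 : T (t0 + N) = T t0 - k := hTshift t0
      omega
    · exact hM1 c hcN
  · -- injective
    intro c1 hc1 c2 hc2 heq
    rw [Finset.mem_filter, Finset.mem_range] at hc1 hc2
    rcases lt_trichotomy c1 c2 with h | h | h
    · have := hc1.2 c2 h (by omega)
      omega
    · exact h
    · have := hc2.2 c1 h (by omega)
      omega
  · -- surjective
    intro v hv
    rw [Finset.mem_Ioc] at hv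
    set S := (Finset.range N).filter (fun t => v ≤ T t) with hS
    have hSne : S.Nonempty := ⟨t0, by
      rw [Finset.mem_filter, Finset.mem_range]
      exact ⟨ht0N, by omega⟩⟩
    set c := S.max' hSne with hc
    have hcS : c ∈ S := Finset.max'_mem _ _
    rw [Finset.mem_filter, Finset.mem_range] at hcS
    obtain ⟨hcN, hcv⟩ := hcS
    have hlast : ∀ t, c < t → t < N → T t < v := by
      intro t ht1 ht2
      by_contra hcon
      push_neg at hcon
      have : t ∈ S := by
        rw [Finset.mem_filter, Finset.mem_range]
        exact ⟨ht2, hcon⟩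
      have := Finset.le_max' _ _ this
      omega
    have hTc : T c = v := by
      by_contra hcon
      have hlt : v < T c := by omega
      have hstep := hTstep c
      rcases Nat.lt_or_ge (c + 1) N with h | h
      · have : c + 1 ∈ S := by
          rw [Finset.mem_filter, Finset.mem_range]
          exact ⟨h, by omega⟩
        have := Finset.le_max' _ _ this
        omega
      · have hceq : c + 1 = N := by omega
        have := hM3 (c + 1) (by omega) (by omega)
        omega
    have hgood : ∀ t, c < t → t < c + N → T t < T c := by
      intro t ht1 ht2
      rcases Nat.lt_or_ge t N with h | h
      · have := hlast t ht1 h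
        omega
      · have := hM3 t h (by omega)
        omega
    exact ⟨c, by
      rw [Finset.mem_filter, Finset.mem_range]
      exact ⟨hcN, hgood⟩, hTc⟩

end Aux

/-- With `N = rn + k`, the equivalence class of `α ∈ [N]^n` (all shifts of `α` by constant
multiples of `(1,…,1)` mod `N`, values in `[N]`) has exactly `N` elements, and contains
exactly `k` `(r,k)`-parking functions. -/
theorem stmt4 (r k n : ℕ) (hr : 0 < r) (hk : 0 < k) (hn : 0 < n)
    (N : ℕ) (hN : N = r * n + k)
    (α : Fin n → ℕ) (hα : ∀ i, α i ∈ Finset.Icc 1 N) :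
    {β : Fin n → ℕ | ∃ c < N, β = fun j => modRep (α j + c) N}.ncard = N ∧
    {β : Fin n → ℕ | (∃ c < N, β = fun j => modRep (α j + c) N) ∧
        IsRKParkingFunction r k n β}.ncard = k := by
  classical
  have hNpos : 0 < N := by omega
  set F : ℕ → (Fin n → ℕ) := fun c => fun j => modRep (α j + c) N with hF
  have hinj : Set.InjOn F (Set.Iio N) := by
    intro c1 h1 c2 h2 heq
    rw [Set.mem_Iio] at h1 h2
    have j0 : Fin n := ⟨0, hn⟩
    have ha := hα j0
    rw [Finset.mem_Icc] at ha
    have heval : modRep (α j0 + c1) N = modRep (α j0 + c2) N := by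
      have := congrFun heq j0
      exact this
    unfold modRep at heval
    have hmod : (α j0 - 1 + c1) % N = (α j0 - 1 + c2) % N := by
      have e1 : α j0 + c1 - 1 = α j0 - 1 + c1 := by omega
      have e2 : α j0 + c2 - 1 = α j0 - 1 + c2 := by omega
      rw [e1, e2] at heval
      omega
    have hme : Nat.ModEq N c1 c2 := Nat.ModEq.add_left_cancel' (α j0 - 1) hmod
    unfold Nat.ModEq at hme
    rw [Nat.mod_eq_of_lt h1, Nat.mod_eq_of_lt h2] at hme
    exact hme
  constructor
  · have hset : {β : Fin n → ℕ | ∃ c < N, β = F c}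
        = F '' (Set.Iio N) := by
      ext β
      simp only [Set.mem_setOf_eq, Set.mem_image, Set.mem_Iio]
      constructor
      · rintro ⟨c, hc, rfl⟩; exact ⟨c, hc, rfl⟩
      · rintro ⟨c, hc, rfl⟩; exact ⟨c, hc, rfl⟩
    rw [hset, Set.ncard_image_of_injOn hinj, ← Finset.coe_range, Set.ncard_coe_finset,
      Finset.card_range]
  · set G := (Finset.range N).filter (fun c => IsRKParkingFunction r k n (F c)) with hG
    have hset : {β : Fin n → ℕ | (∃ c < N, β = F c) ∧
        IsRKParkingFunction r k n β} = F '' ↑G := by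
      ext β
      simp only [Set.mem_setOf_eq, Set.mem_image, Finset.mem_coe, hG, Finset.mem_filter,
        Finset.mem_range]
      constructor
      · rintro ⟨⟨c, hc, rfl⟩, hpark⟩
        exact ⟨c, ⟨hc, hpark⟩, rfl⟩
      · rintro ⟨c, ⟨hc, hpark⟩, rfl⟩
        exact ⟨⟨c, hc, rfl⟩, hpark⟩
    rw [hset, Set.ncard_image_of_injOn (hinj.mono ?sub), Set.ncard_coe_finset]
    case sub =>
      intro c hc
      rw [Finset.mem_coe, hG, Finset.mem_filter, Finset.mem_range] at hc
      exact hc.1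
    have hGeq : G = (Finset.range N).filter
        (fun c => ∀ t, c < t → t < c + N → Tfun r N α t < Tfun r N α c) := by
      apply Finset.filter_congr
      intro c _
      simpa using good_iff hr hk hn hN α hα c
    rw [hGeq]
    exact count_good hr hk hn hN α
end

section
/- Let r and k be positive integers, and for each n ≥ 0 let W_n^{(r,k)} denote the set of weakly increasing (r,k)-parking functions of length n (with the empty sequence allowed for n = 0). Then there is a bijection ψ from k-tuples (α_1,...,α_k) of weakly increasing (r,1)-parking functions with total length n to W_n^{(r,k)}, given by: ψ(α_1,...,α_k) is the concatenation of the sequences α_i', where α_i' is obtained from α_i by adding r(ℓ(α_1)+...+ℓ(α_{i-1})) + (i-1) to each of its terms. -/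
/-!
Unfolding the definition, `ψ(α₁, …, α_k) = α₁ ++ (ψ(α₂, …, α_k) + (r ℓ(α₁) + 1))`, so by induction
on `k` it suffices that every weakly increasing `(r, k+1)`-parking function `l` splits uniquely as
`a ++ (w + (r ℓ(a) + 1))` with `a` an `(r, 1)`- and `w` an `(r, k)`-parking function.
The split point is the first (0-based) index `m` with `l_m > 1 + m r`: the entries before it obey
the `(r, 1)`-bound, and since `l` is weakly increasing all later entries are at least `m r + 2`, so
subtracting `m r + 1` leaves an `(r, k)`-parking function. The split is unique because the first
entry of the shifted block is at least `r ℓ(a) + 2`, while an `(r, 1)`-parking function longer than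
`a` has entry at most `1 + r ℓ(a)` at that position.
-/

/-- A list is a weakly increasing `(r,k)`-parking function: it is weakly increasing,
has positive entries, and its `i`-th entry (1-indexed) is at most `k + (i-1)r`. -/
def IsWIPF (r k : ℕ) (l : List ℕ) : Prop :=
  l.Pairwise (· ≤ ·) ∧ ∀ i : Fin l.length, 1 ≤ l.get i ∧ l.get i ≤ k + i.val * r

/-- The map ψ: given a `k`-tuple `α` of sequences, shift every term of `α i` up by
`r(ℓ(α 1) + ⋯ + ℓ(α (i-1))) + (i-1)` and concatenate. -/
def psiMap (r k : ℕ) (α : Fin k → List ℕ) : List ℕ :=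
  (List.ofFn fun i : Fin k =>
    (α i).map (fun x => x + r * (∑ j ∈ Finset.Iio i, (α j).length) + i.val)).flatten

lemma isWIPF_iff {r k : ℕ} {l : List ℕ} :
    IsWIPF r k l ↔ l.Pairwise (· ≤ ·) ∧
      ∀ p (hp : p < l.length), 1 ≤ l[p] ∧ l[p] ≤ k + p * r :=
  and_congr_right fun _ => ⟨fun h p hp => h ⟨p, hp⟩, fun h i => h i.1 i.2⟩

namespace IsWIPF

variable {r k : ℕ} {l : List ℕ}

lemma one_le_of_mem (h : IsWIPF r k l) {v : ℕ} (hv : v ∈ l) : 1 ≤ v := by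
  obtain ⟨p, hp, rfl⟩ := List.mem_iff_getElem.mp hv
  exact (h.2 ⟨p, hp⟩).1

lemma getElem_le (h : IsWIPF r k l) {p : ℕ} (hp : p < l.length) : l[p] ≤ k + p * r :=
  (h.2 ⟨p, hp⟩).2

lemma le_of_mem (h : IsWIPF r k l) {v : ℕ} (hv : v ∈ l) : v ≤ k + l.length * r := by
  obtain ⟨p, hp, rfl⟩ := List.mem_iff_getElem.mp hv
  exact (h.getElem_le hp).trans (by gcongr)

end IsWIPF

def appendShift (r : ℕ) (a w : List ℕ) : List ℕ :=
  a ++ w.map (· + (a.length * r + 1))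

lemma sum_Iio_succ_cons {M : Type*} [AddCommMonoid M] {k : ℕ} (a : M) (f : Fin k → M)
    (i : Fin k) :
    ∑ j ∈ Finset.Iio i.succ, (Fin.cons a f : Fin (k + 1) → M) j = a + ∑ j ∈ Finset.Iio i, f j := by
  rw [← Finset.Ico_bot, bot_eq_zero, ← Finset.Ioo_insert_left (Fin.succ_pos i),
    Finset.sum_insert (by simp), ← Fin.map_succEmb_Iio, Finset.sum_map]
  simp

lemma psiMap_cons (r k : ℕ) (a : List ℕ) (β : Fin k → List ℕ) :
    psiMap r (k + 1) (Fin.cons a β) = appendShift r a (psiMap r k β) := by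
  have hlen : (fun j => ((Fin.cons a β : Fin (k + 1) → List ℕ) j).length) =
      Fin.cons a.length fun j => (β j).length := by
    ext j; cases j using Fin.cases <;> rfl
  simp only [psiMap, appendShift, List.ofFn_succ, List.flatten_cons, List.map_flatten,
    List.map_ofFn]
  congr 1
  · simp [Finset.Iio_eq_empty.mpr fun _ _ => Fin.zero_le _]
  · congr 2; funext i
    simp only [Function.comp_apply, Fin.cons_succ, List.map_map, hlen, sum_Iio_succ_cons,
      Fin.val_succ]
    congr 1; funext x
    simp only [Function.comp_apply]
    ring

lemma psiMap_length (r k : ℕ) (α : Fin k → List ℕ) :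
    (psiMap r k α).length = ∑ i, (α i).length := by
  simp [psiMap, List.sum_ofFn]

lemma IsWIPF.appendShift {r k : ℕ} {a w : List ℕ} (ha : IsWIPF r 1 a) (hw : IsWIPF r k w) :
    IsWIPF r (k + 1) (appendShift r a w) := by
  rw [isWIPF_iff]
  refine ⟨List.pairwise_append.mpr ⟨ha.1, hw.1.map _ fun _ _ h => by omega, ?_⟩, fun p hp => ?_⟩
  · intro x hx y hy
    obtain ⟨z, hz, rfl⟩ := List.mem_map.mp hy
    have := ha.le_of_mem hx
    have := hw.one_le_of_mem hz
    omega
  · simp only [_root_.appendShift, List.length_append, List.length_map] at hp ⊢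
    by_cases hpa : p < a.length
    · rw [List.getElem_append_left hpa]
      have := (isWIPF_iff.mp ha).2 p hpa
      omega
    · push Not at hpa
      rw [List.getElem_append_right hpa, List.getElem_map]
      have hq : p - a.length < w.length := by omega
      have := (isWIPF_iff.mp hw).2 _ hq
      have hpr : (p - a.length) * r + a.length * r = p * r := by
        rw [← Nat.add_mul, Nat.sub_add_cancel hpa]
      omega

lemma length_le_of_appendShift_eq {r : ℕ} {a w a' w' : List ℕ} (ha' : IsWIPF r 1 a')
    (hw : ∀ v ∈ w, 1 ≤ v) (h : appendShift r a w = appendShift r a' w') :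
    a'.length ≤ a.length := by
  by_contra! hlt
  have hy : (appendShift r a w)[a.length]? = some a'[a.length] := by
    rw [h, appendShift, List.getElem?_append_left hlt, List.getElem?_eq_getElem hlt]
  rw [appendShift, List.getElem?_append_right le_rfl, Nat.sub_self] at hy
  obtain ⟨z, hz, hza⟩ := List.mem_map.mp (List.mem_of_getElem? hy)
  have := ha'.getElem_le hlt
  have := hw z hz
  omega

lemma appendShift_inj {r : ℕ} {a w a' w' : List ℕ} (ha : IsWIPF r 1 a) (ha' : IsWIPF r 1 a')
    (hw : ∀ v ∈ w, 1 ≤ v) (hw' : ∀ v ∈ w', 1 ≤ v) (h : appendShift r a w = appendShift r a' w') :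
    a = a' ∧ w = w' := by
  have hlen : a.length = a'.length :=
    le_antisymm (length_le_of_appendShift_eq ha hw' h.symm) (length_le_of_appendShift_eq ha' hw h)
  obtain ⟨rfl, hmap⟩ := List.append_inj h hlen
  exact ⟨rfl, List.map_injective_iff.mpr (add_left_injective _) hmap⟩

lemma exists_split_index {l : List ℕ} (hl : l.Pairwise (· ≤ ·)) (r : ℕ) :
    ∃ m ≤ l.length, (∀ p (hp : p < l.length), p < m → l[p] ≤ 1 + p * r) ∧
      ∀ v ∈ l.drop m, m * r + 2 ≤ v := by
  classical
  have hex : ∃ m, ∀ hm : m < l.length, 1 + m * r < l[m] :=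
    ⟨l.length, fun h => absurd h (lt_irrefl _)⟩
  refine ⟨Nat.find hex, Nat.find_le fun h => absurd h (lt_irrefl _), fun p hp hpm => ?_,
    fun v hv => ?_⟩
  · have := Nat.find_min hex hpm
    push Not at this
    exact this.2
  · obtain ⟨t, ht, rfl⟩ := List.mem_iff_getElem.mp hv
    rw [List.length_drop] at ht
    rw [List.getElem_drop]
    have := Nat.find_spec hex (by omega)
    have := hl.sortedLE.getElem_le_getElem_of_le (hi := by omega) (hj := by omega)
      (Nat.le_add_right (Nat.find hex) t)
    omega

lemma exists_appendShift_eq {r k : ℕ} {l : List ℕ} (hl : IsWIPF r (k + 1) l) :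
    ∃ a w, IsWIPF r 1 a ∧ IsWIPF r k w ∧ appendShift r a w = l := by
  obtain ⟨m, hml, hpre, hsuf⟩ := exists_split_index hl.1 r
  have hlen : (l.take m).length = m := List.length_take_of_le hml
  refine ⟨l.take m, (l.drop m).map (· - (m * r + 1)), ?_, ?_, ?_⟩
  · refine isWIPF_iff.mpr ⟨hl.1.sublist (List.take_sublist m l), fun p hp => ?_⟩
    rw [hlen] at hp
    rw [List.getElem_take]
    exact ⟨(isWIPF_iff.mp hl).2 p (by omega) |>.1, hpre p _ hp⟩
  · refine isWIPF_iff.mpr ⟨(hl.1.sublist (List.drop_sublist m l)).map _ fun _ _ h => by omega,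
      fun t ht => ?_⟩
    rw [List.length_map, List.length_drop] at ht
    rw [List.getElem_map, List.getElem_drop]
    have hlow : m * r + 2 ≤ l[m + t] := by
      have := hsuf _ (List.getElem_mem (l := l.drop m) (by simpa using ht))
      rwa [List.getElem_drop] at this
    have := hl.getElem_le (p := m + t) (by omega)
    have hmt : (m + t) * r = m * r + t * r := Nat.add_mul m t r
    omega
  · have hcancel : ((l.drop m).map (· - (m * r + 1))).map (· + (m * r + 1)) = l.drop m := by
      rw [List.map_map]
      refine (List.map_congr_left fun v hv => ?_).trans (List.map_id _)
      have := hsuf v hv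
      simp only [Function.comp_apply, id]
      omega
    rw [appendShift, hlen, hcancel, List.take_append_drop]

lemma psiMap_bijOn (r k : ℕ) :
    Set.BijOn (psiMap r k) {α | ∀ i, IsWIPF r 1 (α i)} {l | IsWIPF r k l} := by
  induction k with
  | zero =>
    refine ⟨fun _ _ => ⟨List.Pairwise.nil, nofun⟩, fun _ _ _ _ _ => funext nofun, ?_⟩
    rintro (_ | ⟨v, l⟩) hl
    · exact ⟨Fin.elim0, nofun, rfl⟩
    · exact absurd (hl.2 ⟨0, by simp⟩) (by simp; omega)
  | succ k ih =>
    refine ⟨?_, ?_, ?_⟩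
    · intro α hα
      induction α using Fin.consCases with | cons a β => ?_
      rw [Set.mem_ofPred_eq, psiMap_cons]
      exact (hα 0).appendShift (ih.mapsTo fun i => hα i.succ)
    · intro α hα α' hα' h
      induction α using Fin.consCases with | cons a β => ?_
      induction α' using Fin.consCases with | cons a' β' => ?_
      rw [psiMap_cons, psiMap_cons] at h
      have hβ : ∀ i, IsWIPF r 1 (β i) := fun i => hα i.succ
      have hβ' : ∀ i, IsWIPF r 1 (β' i) := fun i => hα' i.succ
      obtain ⟨rfl, htail⟩ := appendShift_inj (a := a) (a' := a') (hα 0) (hα' 0)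
        (fun _ => (ih.mapsTo hβ).one_le_of_mem) (fun _ => (ih.mapsTo hβ').one_le_of_mem) h
      rw [ih.injOn hβ hβ' htail]
    · intro l hl
      obtain ⟨a, w, ha, hw, rfl⟩ := exists_appendShift_eq hl
      obtain ⟨β, hβ, rfl⟩ := ih.surjOn hw
      exact ⟨Fin.cons a β, Fin.cases ha hβ, psiMap_cons r k a β⟩

theorem stmt6_general (r k n : ℕ) :
    Set.BijOn (psiMap r k)
      {α : Fin k → List ℕ | (∀ i, IsWIPF r 1 (α i)) ∧ ∑ i, (α i).length = n}
      {l : List ℕ | IsWIPF r k l ∧ l.length = n} :=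
  (psiMap_bijOn r k).inter_mapsTo (fun α (hα : _ = n) => (psiMap_length r k α).trans hα)
    fun α hα => (psiMap_length r k α).symm.trans hα.2

/-- ψ is a bijection from `k`-tuples of weakly increasing `(r,1)`-parking functions of
total length `n` onto the weakly increasing `(r,k)`-parking functions of length `n`. -/
theorem stmt6 (r k n : ℕ) (hr : 0 < r) (hk : 0 < k) :
    Set.BijOn (psiMap r k)
      {α : Fin k → List ℕ | (∀ i, IsWIPF r 1 (α i)) ∧ ∑ i, (α i).length = n}
      {l : List ℕ | IsWIPF r k l ∧ l.length = n} :=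
  stmt6_general r k n
end

section
/- Let r, k be positive integers. For each n ≥ 0 let w_n^{(r,k)} be the number of weakly increasing (r,k)-parking functions of length n (with w_0 = 1). Then the generating functions satisfy (Σ_{n≥0} w_n^{(r,1)} t^n)^k = Σ_{n≥0} w_n^{(r,k)} t^n as formal power series. -/
/-- The number of weakly increasing `(r,k)`-parking functions of length `n`
(equal to `1` for `n = 0`). -/
noncomputable def wcount (r k n : ℕ) : ℕ :=
  {b : Fin n → ℕ | Monotone b ∧ (∀ i, 1 ≤ b i) ∧
    ∀ i : Fin n, b i ≤ k + i.val * r}.ncard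

open Classical in
/-- Finset of weakly increasing `(r,k)`-parking functions of length `n`. -/
noncomputable def Fset (r k n : ℕ) : Finset (Fin n → ℕ) :=
  (Fintype.piFinset fun i : Fin n => Finset.Icc 1 (k + i.val * r)).filter Monotone

lemma mem_Fset {r k n : ℕ} {b : Fin n → ℕ} :
    b ∈ Fset r k n ↔ Monotone b ∧ (∀ i, 1 ≤ b i) ∧ ∀ i : Fin n, b i ≤ k + i.val * r := by
  simp only [Fset, Finset.mem_filter, Fintype.mem_piFinset, Finset.mem_Icc, forall_and]
  tauto

lemma wcount_eq (r k n : ℕ) : wcount r k n = (Fset r k n).card := by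
  rw [wcount, ← Set.ncard_coe_finset]
  congr 1
  ext b
  simp [mem_Fset]

open Classical in
/-- The first index where `b` exceeds the `(r,1)` bound (or `n`). -/
noncomputable def splitIdx (r n : ℕ) (b : Fin n → ℕ) : ℕ :=
  Nat.find (p := fun m => n ≤ m ∨ ∃ h : m < n, 1 + m * r < b ⟨m, h⟩) ⟨n, Or.inl le_rfl⟩

lemma conv_lemma (r k n : ℕ) (hk : 0 < k) :
    wcount r (k + 1) n
      = ∑ m ∈ Finset.range (n + 1), wcount r 1 m * wcount r k (n - m) := by
  classical
  simp only [wcount_eq]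
  have hsplit_le : ∀ b : Fin n → ℕ, splitIdx r n b ≤ n := fun b =>
    Nat.find_le (Or.inl le_rfl)
  rw [Finset.card_eq_sum_card_fiberwise (f := splitIdx r n) (t := Finset.range (n + 1))
      (fun b _ => Finset.mem_range.2 (Nat.lt_succ_of_le (hsplit_le b)))]
  refine Finset.sum_congr rfl fun m hmr => ?_
  have hm : m ≤ n := Nat.lt_succ_iff.1 (Finset.mem_range.1 hmr)
  rw [← Finset.card_product]
  refine Finset.card_bij'
    (i := fun b _ => (fun i : Fin m => b ⟨i.val, lt_of_lt_of_le i.isLt hm⟩,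
      fun j : Fin (n - m) => b ⟨m + j.val, by have := j.isLt; omega⟩ - (1 + m * r)))
    (j := fun cd _ => fun i : Fin n =>
      if h : i.val < m then cd.1 ⟨i.val, h⟩
      else cd.2 ⟨i.val - m, by have := i.isLt; omega⟩ + (1 + m * r))
    ?_ ?_ ?_ ?_
  · -- forward map lands in the product
    rintro b hb
    rw [Finset.mem_filter] at hb
    obtain ⟨hbF, hsp⟩ := hb
    rw [mem_Fset] at hbF
    obtain ⟨hmono, h1, hub⟩ := hbF
    unfold splitIdx at hsp
    rw [Nat.find_eq_iff] at hsp
    obtain ⟨hQ, hmin⟩ := hsp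
    have hbm : ∀ i : Fin n, m ≤ i.val → 1 + m * r < b i := by
      intro i hi
      rcases hQ with h | ⟨h, hb'⟩
      · omega
      · calc 1 + m * r < b ⟨m, h⟩ := hb'
          _ ≤ b i := hmono (Fin.mk_le_mk.mpr hi)
    rw [Finset.mem_product]
    constructor
    · rw [mem_Fset]
      refine ⟨?_, fun i => h1 _, ?_⟩
      · intro i j hij
        exact hmono (Fin.mk_le_mk.mpr hij)
      · intro i
        have h' := hmin i.val i.isLt
        push_neg at h'
        have h2 := h'.2 (lt_of_lt_of_le i.isLt hm)
        simp only [Fin.val_mk] at h2 ⊢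
        omega
    · rw [mem_Fset]
      refine ⟨?_, ?_, ?_⟩
      · intro a b' hab
        dsimp only
        exact Nat.sub_le_sub_right
          (hmono (Fin.mk_le_mk.mpr (Nat.add_le_add_left (Fin.le_def.mp hab) m))) _
      · intro j
        dsimp only
        have := hbm ⟨m + j.val, by have := j.isLt; omega⟩ (Nat.le_add_right m j.val)
        omega
      · intro j
        dsimp only
        have h1' := hub ⟨m + j.val, by have := j.isLt; omega⟩
        simp only [Fin.val_mk] at h1'
        have h2' : (m + j.val) * r = m * r + j.val * r := add_mul _ _ _
        have h3' := hbm ⟨m + j.val, by have := j.isLt; omega⟩ (Nat.le_add_right m j.val)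
        omega
  · -- backward map lands in the fiber
    rintro ⟨c, d⟩ hcd
    rw [Finset.mem_product] at hcd
    have hc : c ∈ Fset r 1 m := hcd.1
    have hd : d ∈ Fset r k (n - m) := hcd.2
    rw [mem_Fset] at hc hd
    obtain ⟨hcm, hc1, hcu⟩ := hc
    obtain ⟨hdm, hd1, hdu⟩ := hd
    dsimp only
    rw [Finset.mem_filter]
    have gmono : Monotone (fun i : Fin n =>
        if h : i.val < m then c ⟨i.val, h⟩
        else d ⟨i.val - m, by have := i.isLt; omega⟩ + (1 + m * r)) := by
      intro i j hij
      have hij' : i.val ≤ j.val := Fin.le_def.mp hij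
      dsimp only
      by_cases hi : i.val < m <;> by_cases hj : j.val < m
      · rw [dif_pos hi, dif_pos hj]
        exact hcm (Fin.mk_le_mk.mpr hij')
      · rw [dif_pos hi, dif_neg hj]
        have h1' := hcu ⟨i.val, hi⟩
        simp only [Fin.val_mk] at h1'
        have h2' : i.val * r ≤ m * r := Nat.mul_le_mul_right _ (by omega)
        have h3' := hd1 ⟨j.val - m, by have := j.isLt; omega⟩
        omega
      · omega
      · rw [dif_neg hi, dif_neg hj]
        have := hdm (a := ⟨i.val - m, by have := i.isLt; omega⟩)
          (b := ⟨j.val - m, by have := j.isLt; omega⟩) (Fin.mk_le_mk.mpr (by omega))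
        omega
    constructor
    · rw [mem_Fset]
      refine ⟨gmono, ?_, ?_⟩
      · intro i
        by_cases hi : i.val < m
        · rw [dif_pos hi]; exact hc1 _
        · rw [dif_neg hi]; omega
      · intro i
        by_cases hi : i.val < m
        · rw [dif_pos hi]
          have := hcu ⟨i.val, hi⟩
          simp only [Fin.val_mk] at this
          omega
        · rw [dif_neg hi]
          have h1' := hdu ⟨i.val - m, by have := i.isLt; omega⟩
          simp only [Fin.val_mk] at h1'
          have h2' : (i.val - m) * r + m * r = i.val * r := by
            rw [← add_mul]; congr 1; omega
          omega
    · unfold splitIdx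
      rw [Nat.find_eq_iff]
      constructor
      · rcases eq_or_lt_of_le hm with h | h
        · exact Or.inl (le_of_eq h.symm)
        · refine Or.inr ⟨h, ?_⟩
          simp only [Fin.val_mk]
          rw [dif_neg (lt_irrefl m)]
          have := hd1 ⟨m - m, by omega⟩
          omega
      · intro i hi
        push_neg
        refine ⟨by omega, fun h => ?_⟩
        simp only [Fin.val_mk]
        rw [dif_pos (by omega : i < m)]
        have := hcu ⟨i, by omega⟩
        simp only [Fin.val_mk] at this
        omega
  · -- left inverse
    intro b hb
    rw [Finset.mem_filter] at hb
    obtain ⟨hbF, hsp⟩ := hb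
    rw [mem_Fset] at hbF
    obtain ⟨hmono, h1, hub⟩ := hbF
    unfold splitIdx at hsp
    rw [Nat.find_eq_iff] at hsp
    obtain ⟨hQ, hmin⟩ := hsp
    funext x
    dsimp only
    by_cases hx : x.val < m
    · rw [dif_pos hx]
    · rw [dif_neg hx]
      have hbx : 1 + m * r < b x := by
        rcases hQ with h | ⟨h, hb'⟩
        · have := x.isLt; omega
        · calc 1 + m * r < b ⟨m, h⟩ := hb'
            _ ≤ b x := hmono (Fin.mk_le_mk.mpr (by omega))
      have hidx : b ⟨m + (x.val - m), by have := x.isLt; omega⟩ = b x :=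
        congrArg b (Fin.ext (by simp only [Fin.val_mk]; omega))
      omega
  · -- right inverse
    rintro ⟨c, d⟩ hcd
    dsimp only
    refine Prod.ext ?_ ?_
    · funext x
      simp only [Fin.val_mk]
      rw [dif_pos x.isLt]
    · funext x
      simp only [Fin.val_mk]
      rw [dif_neg (by omega : ¬ m + x.val < m)]
      have hidx : d ⟨m + x.val - m, by have := x.isLt; omega⟩ = d x :=
        congrArg d (Fin.ext (by simp only [Fin.val_mk]; omega))
      omega

/-- The generating function identity
`(Σ_{n≥0} w_n^{(r,1)} tⁿ)^k = Σ_{n≥0} w_n^{(r,k)} tⁿ`. -/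
theorem stmt7 (r k : ℕ) (hr : 0 < r) (hk : 0 < k) :
    (PowerSeries.mk fun n => (wcount r 1 n : ℤ)) ^ k
      = PowerSeries.mk fun n => (wcount r k n : ℤ) := by
  induction k, hk using Nat.le_induction with
  | base => rw [pow_one]
  | succ k hk1 ih =>
    rw [pow_succ, ih, mul_comm]
    ext n
    rw [PowerSeries.coeff_mul, Finset.Nat.sum_antidiagonal_eq_sum_range_succ_mk,
      PowerSeries.coeff_mk]
    simp only [PowerSeries.coeff_mk]
    rw [conv_lemma r k n hk1]
    push_cast
    rfl
end

section
/- Let n, r, k be positive integers with N := rn - k > 0, and let a ∈ [N]^n be weakly increasing with period p := Π_N(a) (the smallest positive integer with (a + p mod N)_↑ = a). Write ℓ = N/p and n' = n/ℓ. Then n' is an integer and a_{j+n'} = a_j + p for all j ∈ [n - n'], with 1 ≤ a_1 ≤ ... ≤ a_{n'} ≤ p. -/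
/-- The componentwise shift `a + i mod N`, with values in `[N]`. -/
def shiftVec (N : ℕ) {n : ℕ} (a : Fin n → ℕ) (i : ℕ) : Fin n → ℕ :=
  fun j => modRep (a j + i) N

/-- The weakly increasing rearrangement of a tuple. -/
def sortVec {n : ℕ} (v : Fin n → ℕ) : Fin n → ℕ := v ∘ Tuple.sort v

open Finset

lemma card_filter_comp_perm_eq {n : ℕ} (f : Fin n → ℕ) (σ : Equiv.Perm (Fin n)) (v : ℕ) :
    #{j | f (σ j) = v} = #{j | f j = v} :=
  card_bij' (fun j _ => σ j) (fun j _ => σ.symm j) (by simp) (by simp) (by simp) (by simp)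

lemma card_filter_eq_of_sortVec_eq {n : ℕ} {f g : Fin n → ℕ} (h : sortVec f = sortVec g)
    (v : ℕ) : #{j | f j = v} = #{j | g j = v} := by
  rw [← card_filter_comp_perm_eq f (Tuple.sort f), ← card_filter_comp_perm_eq g (Tuple.sort g)]
  simp only [show ∀ j, f (Tuple.sort f j) = g (Tuple.sort g j) from congrFun h]

lemma modRep_add_eq_add_iff {s v p N : ℕ} (hs : s ∈ Icc 1 N) (hv : 1 ≤ v) (hvp : v + p ≤ N) :
    modRep (s + p) N = v + p ↔ s = v := by
  obtain ⟨hs1, hsN⟩ := mem_Icc.mp hs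
  unfold modRep
  rcases le_or_gt (s + p) N with hle | hlt
  · rw [Nat.mod_eq_of_lt (by omega)]
    omega
  · rw [Nat.mod_eq_sub_mod (by omega), Nat.mod_eq_of_lt (by omega)]
    omega

lemma card_filter_add_eq_of_sortVec_shiftVec_eq {n N p : ℕ} {a : Fin n → ℕ}
    (ha : ∀ j, a j ∈ Icc 1 N) (hshift : sortVec (shiftVec N a p) = sortVec a) {v : ℕ}
    (hv : 1 ≤ v) (hvp : v + p ≤ N) : #{j | a j = v + p} = #{j | a j = v} := by
  rw [← card_filter_eq_of_sortVec_eq hshift]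
  simp only [shiftVec, modRep_add_eq_add_iff (ha _) hv hvp]

def countLE {n : ℕ} (a : Fin n → ℕ) (x : ℕ) : ℕ := #{j | a j ≤ x}

section countLE

variable {n N p : ℕ} {a : Fin n → ℕ}

lemma countLE_succ (x : ℕ) : countLE a (x + 1) = countLE a x + #{j | a j = x + 1} := by
  rw [countLE, countLE, ← card_union_of_disjoint (disjoint_filter.mpr fun _ _ h => by omega),
    ← filter_or]
  simp only [Nat.le_succ_iff]

lemma countLE_zero (ha : ∀ j, 1 ≤ a j) : countLE a 0 = 0 := by
  simp only [countLE, nonpos_iff_eq_zero, card_eq_zero, filter_eq_empty_iff]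
  exact fun j _ => Nat.one_le_iff_ne_zero.mp (ha j)

lemma countLE_of_forall_le (ha : ∀ j, a j ≤ N) : countLE a N = n := by
  simp [countLE, ha]

lemma Monotone.apply_le_iff_lt_countLE (hmono : Monotone a) (x : ℕ) (j : Fin n) :
    a j ≤ x ↔ j.val < countLE a x := by
  constructor
  · intro hj
    have hsub : Iic j ⊆ ({i | a i ≤ x} : Finset (Fin n)) := fun i hi =>
      mem_filter.mpr ⟨mem_univ i, (hmono (mem_Iic.mp hi)).trans hj⟩
    simpa [countLE, Fin.card_Iic, Nat.succ_le_iff] using card_le_card hsub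
  · intro hj
    by_contra! hxj
    have hsub : ({i | a i ≤ x} : Finset (Fin n)) ⊆ Iio j := fun i hi => by
      simp only [mem_filter, mem_univ, true_and] at hi
      exact mem_Iio.mpr (lt_of_not_ge fun hji => (hi.trans_lt hxj).not_ge (hmono hji))
    have := card_le_card hsub
    rw [Fin.card_Iio] at this
    exact lt_irrefl _ (hj.trans_le this)

variable (hper : ∀ v, 1 ≤ v → v + p ≤ N → #{j | a j = v + p} = #{j | a j = v})
include hper

lemma countLE_add_period (ha : ∀ j, 1 ≤ a j) {x : ℕ} (hx : x + p ≤ N) :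
    countLE a (x + p) = countLE a x + countLE a p := by
  induction x with
  | zero => simp [countLE_zero ha]
  | succ x ih =>
    rw [Nat.add_right_comm, countLE_succ, ih (by omega), countLE_succ,
      Nat.add_right_comm x, hper (x + 1) (by omega) (by omega)]
    ring

lemma countLE_mul_period (ha : ∀ j, 1 ≤ a j) {t : ℕ} (ht : t * p ≤ N) :
    countLE a (t * p) = t * countLE a p := by
  induction t with
  | zero => simp [countLE_zero ha]
  | succ t ih =>
    rw [Nat.succ_mul] at ht ⊢
    rw [countLE_add_period hper ha ht, ih (by omega), Nat.succ_mul]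

lemma Monotone.apply_eq_add_of_val_eq_add_countLE (hmono : Monotone a)
    (ha : ∀ j, a j ∈ Icc 1 N) (hpN : p ≤ N) (i j : Fin n) (hij : i.val = j.val + countLE a p) :
    a i = a j + p := by
  have ha1 : ∀ j, 1 ≤ a j := fun j => (mem_Icc.mp (ha j)).1
  have hadd {x : ℕ} (hx : x + p ≤ N) := countLE_add_period hper ha1 hx
  have hle := hmono.apply_le_iff_lt_countLE
  have hjN : a j + p ≤ N := by
    have hsplit : countLE a (N - p) + countLE a p = n := by
      rw [← hadd (by omega), Nat.sub_add_cancel hpN,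
        countLE_of_forall_le fun j => (mem_Icc.mp (ha j)).2]
    have : a j ≤ N - p := (hle _ j).mpr (by omega)
    omega
  have hupper : a i ≤ a j + p := by
    rw [hle, hadd hjN]
    have := (hle (a j) j).mp le_rfl
    omega
  have hlower : ¬ a i ≤ a j - 1 + p := by
    rw [hle, hadd (by omega)]
    have := (hle (a j - 1) j).not.mp (by have := ha1 j; omega)
    omega
  omega

end countLE

theorem stmt12_general (n N : ℕ) (hn : 0 < n)
    (a : Fin n → ℕ) (ha : ∀ j, a j ∈ Finset.Icc 1 N) (hmono : Monotone a)
    (p : ℕ)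
    (hshift : sortVec (shiftVec N a p) = sortVec a)
    (hdvd : p ∣ N) :
    (N / p) ∣ n ∧
    (∀ j : Fin n, ∀ h : j.val + n / (N / p) < n, a ⟨j.val + n / (N / p), h⟩ = a j + p) ∧
    (∀ j : Fin n, j.val < n / (N / p) → a j ≤ p) ∧
    1 ≤ a ⟨0, hn⟩ := by
  have ha1 : ∀ j, 1 ≤ a j := fun j => (mem_Icc.mp (ha j)).1
  have haN : ∀ j, a j ≤ N := fun j => (mem_Icc.mp (ha j)).2
  have hNpos : 0 < N := (ha1 ⟨0, hn⟩).trans (haN _)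
  have hpN : p ≤ N := Nat.le_of_dvd hNpos hdvd
  have hper := fun v => card_filter_add_eq_of_sortVec_shiftVec_eq ha hshift (v := v)
  have hn_eq : n = N / p * countLE a p := by
    rw [← countLE_mul_period hper ha1 (Nat.div_mul_cancel hdvd).le, Nat.div_mul_cancel hdvd,
      countLE_of_forall_le haN]
  have hm : n / (N / p) = countLE a p :=
    Nat.div_eq_of_eq_mul_right (Nat.div_pos hpN (Nat.pos_of_dvd_of_pos hdvd hNpos)) hn_eq
  refine ⟨⟨_, hn_eq⟩, fun j _ => ?_, fun j hj => ?_, ha1 _⟩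
  · exact hmono.apply_eq_add_of_val_eq_add_countLE hper ha hpN _ j (by simp only [hm])
  · exact (hmono.apply_le_iff_lt_countLE p j).mpr (hm ▸ hj)

/-- Let `N = rn - k > 0` and let `a ∈ [N]^n` be weakly increasing with least period
`p = Π_N(a)` (so `p ∣ N`); set `ℓ = N/p` and `n' = n/ℓ`. Then `ℓ ∣ n` (so `n'` is an
integer), `a (j + n') = a j + p` for all `j ∈ [n - n']`, and
`1 ≤ a 1 ≤ ⋯ ≤ a n' ≤ p`. -/
theorem stmt12 (n r k N : ℕ) (hr : 0 < r) (hk : 0 < k) (hn : 0 < n)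
    (hN : N = r * n - k) (hNpos : 0 < N)
    (a : Fin n → ℕ) (ha : ∀ j, a j ∈ Finset.Icc 1 N) (hmono : Monotone a)
    (p : ℕ) (hp : 0 < p)
    (hshift : sortVec (shiftVec N a p) = sortVec a)
    (hmin : ∀ q, 0 < q → sortVec (shiftVec N a q) = sortVec a → p ≤ q)
    (hdvd : p ∣ N) :
    (N / p) ∣ n ∧
    (∀ j : Fin n, ∀ h : j.val + n / (N / p) < n, a ⟨j.val + n / (N / p), h⟩ = a j + p) ∧
    (∀ j : Fin n, j.val < n / (N / p) → a j ≤ p) ∧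
    1 ≤ a ⟨0, hn⟩ :=
  stmt12_general n N hn a ha hmono p hshift hdvd
end

section
/- Let n, r, k be positive integers with rn - k > 0. Then the number of weakly increasing integer vectors (b_1,...,b_n) satisfying: (I) b_1 = w for some w ∈ [k] and b_n - b_1 < rn - k; (II) b_{q(w)} = w where q(w) = ⌈w/r⌉; (III) b_j ≤ (j-1)r whenever b_j > w; equals (k/(rn-k))·binom(rn-k+n-1, n). -/
open Finset

/-- The dual parking function set `S_n^{(r,k)}` (weakly increasing members): writing
`w = b 1` and `q(w) = ⌈w/r⌉` (the smallest `q` with `w ≤ qr`), it consists of the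
weakly increasing `b` with (I) `w ∈ [k]` and `b n - b 1 < rn - k`; (II) `b (q(w)) = w`;
(III) `b j ≤ (j-1)r` whenever `b j > w`. -/
def SDual (r k n N : ℕ) (hn : 0 < n) : Set (Fin n → ℕ) :=
  {b | Monotone b ∧ 1 ≤ b ⟨0, hn⟩ ∧ b ⟨0, hn⟩ ≤ k ∧
    b ⟨n - 1, Nat.sub_lt hn one_pos⟩ - b ⟨0, hn⟩ < N ∧
    (∃ j : Fin n, j.val + 1 = (b ⟨0, hn⟩ + r - 1) / r ∧ b j = b ⟨0, hn⟩) ∧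
    ∀ j : Fin n, b ⟨0, hn⟩ < b j → b j ≤ j.val * r}


namespace DP14

/-! ### The integer-valued potential function and the cycle lemma -/

def Tt (r N : ℕ) (A : Multiset (ZMod N)) (y : ZMod N) (t : ℕ) : ℤ :=
  (r : ℤ) * (A.countP fun a => (a - y).val < t) - (t : ℤ)

lemma Icc_ne (N : ℕ) [NeZero N] : (Finset.Icc 1 N).Nonempty :=
  ⟨1, Finset.mem_Icc.2 ⟨le_refl 1, Nat.one_le_iff_ne_zero.2 (NeZero.ne N)⟩⟩

noncomputable def Vv (r N : ℕ) [NeZero N] (A : Multiset (ZMod N)) (x : ZMod N) : ℤ :=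
  (Finset.Icc 1 N).inf' (Icc_ne N) (Tt r N A x)

lemma val_neg_one (N : ℕ) [NeZero N] : (-1 : ZMod N).val = N - 1 := by
  have hN : 0 < N := Nat.pos_of_ne_zero (NeZero.ne N)
  have h1 : ((N - 1 : ℕ) : ZMod N) = -1 := by
    have : ((N - 1 : ℕ) : ZMod N) + 1 = 0 := by
      have h2 : ((N - 1 : ℕ) : ZMod N) + 1 = ((N - 1 + 1 : ℕ) : ZMod N) := by push_cast; ring
      rw [h2, Nat.sub_add_cancel hN, ZMod.natCast_self]
    linear_combination this
  rw [← h1, ZMod.val_cast_of_lt (Nat.sub_lt hN one_pos)]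

lemma val_sub_one {N : ℕ} [NeZero N] (z : ZMod N) (hz : z ≠ 0) : (z - 1).val = z.val - 1 := by
  have hv1 : 1 ≤ z.val := Nat.one_le_iff_ne_zero.2 (fun h => hz ((ZMod.val_eq_zero z).1 h))
  have hlt : z.val - 1 < N := lt_of_le_of_lt (Nat.sub_le _ _) (ZMod.val_lt z)
  have h1 : ((z.val - 1 : ℕ) : ZMod N) = z - 1 := by
    push_cast [Nat.cast_sub hv1]
    rw [ZMod.natCast_val, ZMod.cast_id]
  rw [← h1, ZMod.val_cast_of_lt hlt]

lemma countP_split {N : ℕ} [NeZero N] (A : Multiset (ZMod N)) (x : ZMod N) (t : ℕ)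
    (ht1 : 1 ≤ t) (htN : t ≤ N) :
    (A.countP fun a => (a - x).val < t)
      = A.count x + A.countP (fun a => (a - (x + 1)).val < t - 1) := by
  have hsplit : ∀ (p : ZMod N → Prop) [DecidablePred p],
      A.countP p = (A.filter (x = ·)).countP p + (A.filter (¬ x = ·)).countP p := by
    intro p _
    rw [← Multiset.countP_add, Multiset.filter_add_not]
  rw [hsplit (fun a => (a - x).val < t), hsplit (fun a => (a - (x + 1)).val < t - 1)]
  have c1 : (A.filter (x = ·)).countP (fun a => (a - x).val < t) = A.count x := by
    rw [Multiset.countP_eq_card.2, ← Multiset.count_eq_card_filter_eq]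
    · intro a ha
      rcases Multiset.mem_filter.1 ha with ⟨-, h⟩
      subst h
      simp; omega
  have c1' : (A.filter (x = ·)).countP (fun a => (a - (x + 1)).val < t - 1) = 0 := by
    rw [Multiset.countP_eq_zero]
    intro a ha
    rcases Multiset.mem_filter.1 ha with ⟨-, h⟩
    subst h
    have hx1 : (x - (x + 1)) = (-1 : ZMod N) := by ring
    rw [hx1, val_neg_one]
    omega
  have c2 : (A.filter (¬ x = ·)).countP (fun a => (a - x).val < t)
      = (A.filter (¬ x = ·)).countP (fun a => (a - (x + 1)).val < t - 1) := by
    apply Multiset.countP_congr rfl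
    intro a ha
    rcases Multiset.mem_filter.1 ha with ⟨-, hne⟩
    have hz : a - x ≠ 0 := sub_ne_zero.2 (fun h => hne h.symm)
    have hv1 : 1 ≤ (a - x).val := Nat.one_le_iff_ne_zero.2 (fun h => hz ((ZMod.val_eq_zero _).1 h))
    have hrw : a - (x + 1) = (a - x) - 1 := by ring
    rw [hrw, val_sub_one _ hz]
    apply propext
    omega
  rw [c1, c1', c2]
  ring

lemma Tt_step {r N : ℕ} [NeZero N] (A : Multiset (ZMod N)) (x : ZMod N) (t : ℕ)
    (ht1 : 1 ≤ t) (htN : t ≤ N) :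
    Tt r N A x t = ((r : ℤ) * A.count x - 1) + Tt r N A (x + 1) (t - 1) := by
  unfold Tt
  rw [countP_split A x t ht1 htN]
  push_cast [Nat.cast_sub ht1]
  ring

lemma Tt_zero {r N : ℕ} (A : Multiset (ZMod N)) (y : ZMod N) : Tt r N A y 0 = 0 := by
  unfold Tt
  rw [Multiset.countP_eq_zero.2 (by intro a _; omega)]
  simp

lemma Tt_top {r N : ℕ} [NeZero N] (A : Multiset (ZMod N)) (y : ZMod N) :
    Tt r N A y N = (r : ℤ) * Multiset.card A - N := by
  unfold Tt
  rw [Multiset.countP_eq_card.2 (fun a _ => ZMod.val_lt _)]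

lemma inf'_add_const {β : Type*} (s : Finset β) (H : s.Nonempty) (c : ℤ) (f : β → ℤ) :
    s.inf' H (fun b => c + f b) = c + s.inf' H f := by
  apply le_antisymm
  · obtain ⟨i, hi, h⟩ := Finset.exists_mem_eq_inf' H f
    rw [h]
    exact Finset.inf'_le _ hi
  · rw [Finset.le_inf'_iff]
    intro b hb
    exact add_le_add (le_refl c) (Finset.inf'_le _ hb)

lemma Vv_le {r N : ℕ} [NeZero N] (A : Multiset (ZMod N)) (x : ZMod N) {t : ℕ}
    (ht : t ∈ Finset.Icc 1 N) : Vv r N A x ≤ Tt r N A x t :=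
  Finset.inf'_le _ ht

lemma Vv_rec {r N : ℕ} [NeZero N] (A : Multiset (ZMod N))
    (hpos : (N : ℤ) < (r : ℤ) * Multiset.card A) (x : ZMod N) :
    Vv r N A x = ((r : ℤ) * A.count x - 1) + min 0 (Vv r N A (x + 1)) := by
  have hN : 0 < N := Nat.pos_of_ne_zero (NeZero.ne N)
  have h1 : Vv r N A x
      = (Finset.Icc 1 N).inf' (Icc_ne N) (fun t => ((r : ℤ) * A.count x - 1) + Tt r N A (x + 1) (t - 1)) := by
    refine Finset.inf'_congr (Icc_ne N) rfl (fun t ht => ?_)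
    rcases Finset.mem_Icc.1 ht with ⟨ht1, htN⟩
    exact Tt_step A x t ht1 htN
  rw [h1, inf'_add_const]
  congr 1
  have h1N : (1 : ℕ) ∈ Finset.Icc 1 N := Finset.mem_Icc.2 ⟨le_refl 1, hN⟩
  have hle0 : (Finset.Icc 1 N).inf' (Icc_ne N) (fun t => Tt r N A (x + 1) (t - 1)) ≤ 0 := by
    have := Finset.inf'_le (f := fun t => Tt r N A (x + 1) (t - 1)) h1N
    simpa only [Nat.sub_self, Tt_zero] using this
  apply le_antisymm
  · rcases le_or_gt 0 (Vv r N A (x + 1)) with hv | hv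
    · rw [min_eq_left hv]
      exact hle0
    · rw [min_eq_right hv.le]
      obtain ⟨s, hs, hVs⟩ := Finset.exists_mem_eq_inf' (Icc_ne N) (Tt r N A (x + 1))
      rcases Finset.mem_Icc.1 hs with ⟨hs1, hsN⟩
      have hVs' : Vv r N A (x + 1) = Tt r N A (x + 1) s := hVs
      have hsne : s ≠ N := by
        intro h
        rw [hVs', h, Tt_top] at hv
        omega
      have hmem : s + 1 ∈ Finset.Icc 1 N := Finset.mem_Icc.2 ⟨by omega, by omega⟩
      have := Finset.inf'_le (f := fun t => Tt r N A (x + 1) (t - 1)) hmem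
      simpa only [Nat.add_sub_cancel, ← hVs'] using this
  · rw [Finset.le_inf'_iff]
    intro t ht
    rcases Finset.mem_Icc.1 ht with ⟨ht1, htN⟩
    rcases eq_or_lt_of_le ht1 with h1 | h2
    · rw [← h1]
      simpa [Tt_zero] using min_le_left 0 (Vv r N A (x + 1))
    · have hmem : t - 1 ∈ Finset.Icc 1 N := Finset.mem_Icc.2 ⟨by omega, by omega⟩
      exact le_trans (min_le_right _ _) (Vv_le A (x + 1) hmem)

lemma Vv_sum {r N n k : ℕ} [NeZero N] (A : Multiset (ZMod N))
    (hA : Multiset.card A = n) (hk : 0 < k) (hrn : r * n = N + k) :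
    ∑ x : ZMod N, (Vv r N A x).toNat = k := by
  have hN : 0 < N := Nat.pos_of_ne_zero (NeZero.ne N)
  have hrnZ : (r : ℤ) * n = N + k := by exact_mod_cast congrArg (Nat.cast : ℕ → ℤ) hrn
  have hpos : (N : ℤ) < (r : ℤ) * Multiset.card A := by
    rw [hA]
    have : (0 : ℤ) < k := by exact_mod_cast hk
    linarith
  have hcnt : ∑ x : ZMod N, A.count x = Multiset.card A := by
    rw [← Multiset.toFinset_sum_count_eq A]
    apply (Finset.sum_subset (Finset.subset_univ _) _).symm
    intro x _ hx
    exact Multiset.count_eq_zero.2 (by simpa using hx)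
  have hcast : ((∑ x : ZMod N, (Vv r N A x).toNat : ℕ) : ℤ) = k := by
    push_cast
    have step1 : ∀ x : ZMod N, ((Vv r N A x).toNat : ℤ)
        = Vv r N A x - min 0 (Vv r N A x) := by
      intro x
      rw [Int.toNat_eq_max]
      have := min_add_max (Vv r N A x) (0 : ℤ)
      rw [min_comm]
      linarith
    rw [Finset.sum_congr rfl (fun x _ => step1 x), Finset.sum_sub_distrib]
    have step2 : ∑ x : ZMod N, Vv r N A x
        = ∑ x : ZMod N, (((r : ℤ) * A.count x - 1) + min 0 (Vv r N A (x + 1))) :=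
      Finset.sum_congr rfl (fun x _ => Vv_rec A hpos x)
    rw [step2, Finset.sum_add_distrib]
    have step3 : ∑ x : ZMod N, min 0 (Vv r N A (x + 1)) = ∑ x : ZMod N, min 0 (Vv r N A x) :=
      Fintype.sum_equiv (Equiv.addRight (1 : ZMod N)) _ _ (fun x => rfl)
    rw [step3]
    have step4 : ∑ x : ZMod N, ((r : ℤ) * A.count x - 1) = (r : ℤ) * n - N := by
      rw [Finset.sum_sub_distrib, ← Finset.mul_sum]
      have : ∑ x : ZMod N, (A.count x : ℤ) = (n : ℤ) := by
        rw [← Nat.cast_sum]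
        exact_mod_cast congrArg (Nat.cast : ℕ → ℤ) (hcnt.trans hA)
      rw [this]
      simp [Finset.card_univ, ZMod.card]
    rw [step4]
    linarith
  exact_mod_cast hcast

open scoped Classical in
noncomputable def PS (n r k N : ℕ) (hn : 0 < n) : Finset (ℕ × (Fin n → Fin N)) :=
  ((Finset.Icc 1 k) ×ˢ Finset.univ).filter (fun wc =>
    Monotone wc.2 ∧ (wc.2 ⟨0, hn⟩).val = 0 ∧
      ∀ j : Fin n, 0 < (wc.2 j).val → wc.1 + (wc.2 j).val ≤ j.val * r)

noncomputable def Phi (n N : ℕ) (x : ZMod N) (c : Fin n → Fin N) : Sym (ZMod N) n :=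
  ⟨Multiset.map (fun j => x + (((c j).val : ℕ) : ZMod N)) Finset.univ.val, by
    rw [Multiset.card_map]; exact Finset.card_fin n⟩

open scoped Classical in
lemma fiber_card (n r k N : ℕ) [NeZero N] (hn : 0 < n) (hk : 0 < k) (hrn : r * n = N + k)
    (x : ZMod N) (A : Sym (ZMod N) n) :
    ((PS n r k N hn).filter (fun wc => Phi n N x wc.2 = A)).card = (Vv r N A.1 x).toNat := by
  have hN : 0 < N := Nat.pos_of_ne_zero (NeZero.ne N)
  have hrnZ : (r : ℤ) * n = N + k := by exact_mod_cast congrArg (Nat.cast : ℕ → ℤ) hrn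
  set M : Multiset (ZMod N) := A.1.map (fun a => a - x) with hMdef
  have hMcard : Multiset.card M = n := by rw [hMdef, Multiset.card_map, A.2]
  set L : List ℕ := Multiset.sort (M.map ZMod.val) (· ≤ ·) with hLdef
  have hLlen : L.length = n := by
    rw [hLdef, Multiset.length_sort, Multiset.card_map, hMcard]
  have hLsorted : L.Pairwise (· ≤ ·) := by rw [hLdef]; exact Multiset.pairwise_sort _ _
  have hLcoe : (L : Multiset ℕ) = M.map ZMod.val := by rw [hLdef]; exact Multiset.sort_eq _ _
  have hLlt : ∀ (i : ℕ) (h : i < L.length), L.get ⟨i, h⟩ < N := by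
    intro i h
    have h1 : L.get ⟨i, h⟩ ∈ L := L.get_mem _
    have h2 : L.get ⟨i, h⟩ ∈ M.map ZMod.val := by
      rw [← hLcoe]; exact_mod_cast h1
    rcases Multiset.mem_map.1 h2 with ⟨a, -, ha⟩
    rw [← ha]; exact ZMod.val_lt a
  set c0 : Fin n → Fin N := fun j => ⟨L.get ⟨j.1, by rw [hLlen]; exact j.2⟩, hLlt _ _⟩ with hc0def
  have hc0val : ∀ j : Fin n, (c0 j).val = L.get ⟨j.1, by rw [hLlen]; exact j.2⟩ := fun j => rfl
  have hc0mono : Monotone c0 := by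
    intro i j hij
    rw [Fin.le_def]
    exact hLsorted.rel_get_of_le (Fin.mk_le_mk.2 (Fin.le_def.1 hij))
  have hofn : List.ofFn (fun j => (c0 j).val) = L := by
    apply List.ext_get
    · simp [hLlen]
    · intro i h1 h2
      simp only [List.get_ofFn]
      rfl
  have hmulc0 : Multiset.map (fun j => (((c0 j).val : ℕ) : ZMod N)) Finset.univ.val = M := by
    rw [Fin.univ_val_map]
    have h1 : List.ofFn (fun j => (((c0 j).val : ℕ) : ZMod N))
        = L.map (fun v => ((v : ℕ) : ZMod N)) := by
      rw [← hofn, List.map_ofFn]; rfl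
    rw [h1]
    have h2 : ((L.map (fun v => ((v : ℕ) : ZMod N)) : List (ZMod N)) : Multiset (ZMod N))
        = (M.map ZMod.val).map (fun v => ((v : ℕ) : ZMod N)) := by
      rw [← hLcoe, ← Multiset.map_coe]
    rw [h2, Multiset.map_map]
    exact (Multiset.map_congr rfl (fun a _ => ZMod.natCast_rightInverse a)).trans
      (Multiset.map_id M)
  have huniq : ∀ c : Fin n → Fin N, Monotone c →
      Multiset.map (fun j => (((c j).val : ℕ) : ZMod N)) Finset.univ.val = M → c = c0 := by
    intro c hmono hmc
    have hval : Multiset.map (fun j => (c j).val) Finset.univ.val = M.map ZMod.val := by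
      have h3 := congrArg (Multiset.map ZMod.val) hmc
      rw [Multiset.map_map] at h3
      rw [← h3]
      exact Multiset.map_congr rfl
        (fun j _ => (ZMod.val_cast_of_lt (c j).isLt).symm)
    have hlist : List.ofFn (fun j => (c j).val) = L := by
      have hperm : ((List.ofFn (fun j => (c j).val) : List ℕ) : Multiset ℕ) = (L : Multiset ℕ) := by
        rw [hLcoe, ← Fin.univ_val_map, hval]
      have hsorted1 : (List.ofFn (fun j => (c j).val)).Pairwise (· ≤ ·) := by
        rw [List.pairwise_ofFn]
        intro i j hij
        exact Fin.le_def.1 (hmono hij.le)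
      exact (Multiset.coe_eq_coe.1 hperm).eq_of_pairwise' hsorted1 hLsorted
    have h5 : (fun j => (c j).val) = (fun j => (c0 j).val) :=
      List.ofFn_injective (hlist.trans hofn.symm)
    funext j
    exact Fin.ext (congrFun h5 j)
  have hcount : ∀ (c : Fin n → Fin N),
      Multiset.map (fun j => (((c j).val : ℕ) : ZMod N)) Finset.univ.val = M →
      ∀ t : ℕ, (A.1.countP fun a => (a - x).val < t)
        = (Finset.univ.filter (fun j : Fin n => (c j).val < t)).card := by
    intro c hmc t
    have h1 : (A.1.countP fun a => (a - x).val < t) = M.countP (fun a => a.val < t) := by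
      rw [hMdef, Multiset.countP_map, Multiset.countP_eq_card_filter]
    have h2 : M.countP (fun a => a.val < t)
        = Multiset.countP (fun j : Fin n => (((c j).val : ℕ) : ZMod N).val < t) Finset.univ.val := by
      rw [← hmc, Multiset.countP_map, Multiset.countP_eq_card_filter]
    have h3 : Multiset.countP (fun j : Fin n => (((c j).val : ℕ) : ZMod N).val < t) Finset.univ.val
        = Multiset.countP (fun j : Fin n => (c j).val < t) Finset.univ.val :=
      Multiset.countP_congr rfl (fun j _ => by rw [ZMod.val_cast_of_lt (c j).isLt])
    have h4 : (Finset.univ.filter (fun j : Fin n => (c j).val < t)).card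
        = Multiset.countP (fun j : Fin n => (c j).val < t) Finset.univ.val := by
      rw [Finset.card, Finset.filter_val, Multiset.countP_eq_card_filter]
    rw [h1, h2, h3, h4]
  have hphi_iff : ∀ c : Fin n → Fin N, (Phi n N x c = A) ↔
      Multiset.map (fun j => (((c j).val : ℕ) : ZMod N)) Finset.univ.val = M := by
    intro c
    constructor
    · intro h
      have h0 : Multiset.map (fun j => x + (((c j).val : ℕ) : ZMod N)) Finset.univ.val = A.1 :=
        Subtype.ext_iff.1 h
      have h5 := congrArg (Multiset.map (fun a => a - x)) h0
      rw [Multiset.map_map, ← hMdef] at h5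
      rw [← h5]
      refine (Multiset.map_congr rfl (fun j _ => ?_)).symm
      simp only [Function.comp_apply]
      ring
    · intro h
      apply Subtype.ext
      show Multiset.map (fun j => x + (((c j).val : ℕ) : ZMod N)) Finset.univ.val = A.1
      have h5 := congrArg (Multiset.map (fun a => x + a)) h
      rw [Multiset.map_map] at h5
      have h6 : M.map (fun a => x + a) = A.1 := by
        rw [hMdef, Multiset.map_map]
        refine (Multiset.map_congr rfl (fun a _ => ?_)).trans (Multiset.map_id A.1)
        show x + (a - x) = a
        ring
      rw [h6] at h5
      rw [← h5]
      exact Multiset.map_congr rfl (fun j _ => rfl)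
  -- the fiber as an image
  have himage : (PS n r k N hn).filter (fun wc => Phi n N x wc.2 = A)
      = (Finset.Icc 1 (Vv r N A.1 x).toNat).image (fun w => (w, c0)) := by
    ext ⟨w, c⟩
    simp only [PS, Finset.mem_filter, Finset.mem_product, Finset.mem_image, Finset.mem_Icc,
      Finset.mem_univ, and_true]
    constructor
    · rintro ⟨⟨⟨hw1, hwk⟩, hmono, hc00, hcond⟩, hphi⟩
      have hmc := (hphi_iff c).1 hphi
      have hceq : c = c0 := huniq c hmono hmc
      refine ⟨w, ⟨hw1, ?_⟩, by rw [hceq]⟩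
      have hwV : (w : ℤ) ≤ Vv r N A.1 x := by
        rw [Vv, Finset.le_inf'_iff]
        intro t ht
        rcases Finset.mem_Icc.1 ht with ⟨ht1, htN⟩
        rw [Tt, hcount c hmc t]
        set F := (Finset.univ.filter (fun j : Fin n => (c j).val < t)).card with hF
        have hFn : F ≤ n := le_trans (Finset.card_filter_le _ _) (by simp)
        have hsum : w + t ≤ r * F := by
          rcases lt_or_ge F n with hlt | hge
          · set j0 : Fin n := ⟨F, hlt⟩ with hj0
            have htle : t ≤ (c j0).val := by
              by_contra hcon
              push_neg at hcon
              have hsub : Finset.range (F + 1)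
                  ⊆ (Finset.univ.filter (fun j : Fin n => (c j).val < t)).image Fin.val := by
                intro i hi
                have hiF : i ≤ F := by
                  have := Finset.mem_range.1 hi; omega
                have hin : i < n := lt_of_le_of_lt hiF hlt
                refine Finset.mem_image.2 ⟨⟨i, hin⟩, ?_, rfl⟩
                refine Finset.mem_filter.2 ⟨Finset.mem_univ _, ?_⟩
                exact lt_of_le_of_lt
                  (Fin.le_def.1 (hmono (Fin.mk_le_mk.2 hiF))) hcon
              have hcard := Finset.card_le_card hsub
              rw [Finset.card_range] at hcard
              have := le_trans hcard (Finset.card_image_le)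
              omega
            have hpos : 0 < (c j0).val := lt_of_lt_of_le ht1 htle
            have hcj := hcond j0 hpos
            have : j0.val = F := rfl
            calc w + t ≤ w + (c j0).val := by omega
              _ ≤ j0.val * r := hcj
              _ = r * F := by rw [this, Nat.mul_comm]
          · have hFeq : F = n := le_antisymm hFn hge
            rw [hFeq, hrn]
            omega
        have : ((w + t : ℕ) : ℤ) ≤ ((r * F : ℕ) : ℤ) := Nat.cast_le.2 hsum
        push_cast at this
        linarith
      have : (w : ℤ) ≤ ((Vv r N A.1 x).toNat : ℤ) := by
        rw [Int.toNat_eq_max]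
        exact le_trans hwV (le_max_left _ _)
      exact_mod_cast this
    · rintro ⟨ww, ⟨hw1, hwV⟩, heq⟩
      rw [Prod.mk.injEq] at heq
      obtain ⟨rfl, hceq⟩ := heq
      rw [← hceq]
      have hwZ : (ww : ℤ) ≤ Vv r N A.1 x := by
        rcases le_or_gt 0 (Vv r N A.1 x) with hv | hv
        · have : ((ww : ℕ) : ℤ) ≤ ((Vv r N A.1 x).toNat : ℤ) := Nat.cast_le.2 hwV
          rwa [Int.toNat_of_nonneg hv] at this
        · rw [Int.toNat_of_nonpos hv.le] at hwV
          omega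
      have hVt : ∀ t ∈ Finset.Icc 1 N, (ww : ℤ) ≤ Tt r N A.1 x t :=
        fun t ht => le_trans hwZ (Vv_le A.1 x ht)
      have hwk : ww ≤ k := by
        have h7 := hVt N (Finset.mem_Icc.2 ⟨hN, le_refl N⟩)
        rw [Tt_top, A.2] at h7
        have : (ww : ℤ) ≤ (k : ℤ) := by linarith
        exact_mod_cast this
      have hc00 : (c0 ⟨0, hn⟩).val = 0 := by
        by_contra hne
        have hvpos : 0 < (c0 ⟨0, hn⟩).val := Nat.pos_of_ne_zero hne
        set v := (c0 ⟨0, hn⟩).val with hv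
        have hvmem : v ∈ Finset.Icc 1 N := Finset.mem_Icc.2 ⟨hvpos, (c0 ⟨0, hn⟩).isLt.le⟩
        have h8 := hVt v hvmem
        rw [Tt, hcount c0 hmulc0 v] at h8
        have hempty : (Finset.univ.filter (fun j : Fin n => (c0 j).val < v)).card = 0 := by
          rw [Finset.card_eq_zero, Finset.filter_eq_empty_iff]
          intro j _
          push_neg
          exact Fin.le_def.1 (hc0mono (Fin.le_def.2 (Nat.zero_le j.1)))
        rw [hempty] at h8
        simp at h8
        omega
      have hcond : ∀ j : Fin n, 0 < (c0 j).val → ww + (c0 j).val ≤ j.val * r := by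
        intro j hj
        set t := (c0 j).val with htdef
        have htmem : t ∈ Finset.Icc 1 N := Finset.mem_Icc.2 ⟨hj, (c0 j).isLt.le⟩
        have h9 := hVt t htmem
        rw [Tt, hcount c0 hmulc0 t] at h9
        set F := (Finset.univ.filter (fun j' : Fin n => (c0 j').val < t)).card with hF
        have hFj : F ≤ j.1 := by
          have hsub : (Finset.univ.filter (fun j' : Fin n => (c0 j').val < t)).image Fin.val
              ⊆ Finset.range j.1 := by
            intro i hi
            rcases Finset.mem_image.1 hi with ⟨j', hj', rfl⟩
            have hlt' : (c0 j').val < (c0 j).val := (Finset.mem_filter.1 hj').2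
            have : j' < j := by
              by_contra hcon
              push_neg at hcon
              exact absurd (Fin.le_def.1 (hc0mono hcon)) (by omega)
            exact Finset.mem_range.2 this
          have h10 := Finset.card_le_card hsub
          rw [Finset.card_range, Finset.card_image_of_injective _ Fin.val_injective] at h10
          exact h10
        have hsum : (ww : ℤ) + t ≤ (r : ℤ) * F := by linarith
        have hFr : (r : ℤ) * F ≤ (r : ℤ) * j.1 :=
          mul_le_mul_of_nonneg_left (by exact_mod_cast hFj) (by positivity)
        have : (ww : ℤ) + t ≤ (j.1 : ℤ) * r := by
          rw [mul_comm]
          linarith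
        exact_mod_cast this
      exact ⟨⟨⟨hw1, hwk⟩, hc0mono, hc00, hcond⟩, (hphi_iff c0).2 hmulc0⟩
  rw [himage, Finset.card_image_of_injective _ (fun a b h => congrArg Prod.fst h),
    Nat.card_Icc]
  omega

lemma PS_card (n r k N : ℕ) [NeZero N] (hn : 0 < n) (hk : 0 < k) (hrn : r * n = N + k) :
    N * (PS n r k N hn).card = k * (N + n - 1).choose n := by
  classical
  have hfib : ∀ x : ZMod N, (PS n r k N hn).card
      = ∑ A : Sym (ZMod N) n, ((PS n r k N hn).filter (fun wc => Phi n N x wc.2 = A)).card :=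
    fun x => Finset.card_eq_sum_card_fiberwise (fun wc _ => Finset.mem_univ _)
  have h1 : N * (PS n r k N hn).card = ∑ _x : ZMod N, (PS n r k N hn).card := by
    rw [Finset.sum_const, Finset.card_univ, ZMod.card, smul_eq_mul]
  rw [h1]
  have h2 : ∀ x : ZMod N,
      ∑ A : Sym (ZMod N) n, ((PS n r k N hn).filter (fun wc => Phi n N x wc.2 = A)).card
      = ∑ A : Sym (ZMod N) n, (Vv r N A.1 x).toNat :=
    fun x => Finset.sum_congr rfl (fun A _ => fiber_card n r k N hn hk hrn x A)
  calc (∑ _x : ZMod N, (PS n r k N hn).card)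
      = ∑ x : ZMod N, ∑ A : Sym (ZMod N) n, (Vv r N A.1 x).toNat := by
        refine Finset.sum_congr rfl (fun x _ => ?_)
        rw [hfib x, h2 x]
    _ = ∑ A : Sym (ZMod N) n, ∑ x : ZMod N, (Vv r N A.1 x).toNat := Finset.sum_comm
    _ = ∑ _A : Sym (ZMod N) n, k :=
        Finset.sum_congr rfl (fun A _ => Vv_sum A.1 A.2 hk hrn)
    _ = k * (N + n - 1).choose n := by
        rw [Finset.sum_const, Finset.card_univ, Sym.card_sym_eq_multichoose, ZMod.card,
          Nat.multichoose_eq, smul_eq_mul, mul_comm]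

lemma ceil_spec (r w : ℕ) (hr : 0 < r) (hw : 0 < w) :
    w ≤ r * ((w + r - 1) / r) ∧ r * ((w + r - 1) / r) < w + r := by
  obtain ⟨u, rfl⟩ := Nat.exists_eq_add_of_le hw
  have harg : 1 + u + r - 1 = u + r := by omega
  rw [harg]
  have hdm := Nat.div_add_mod (u + r) r
  have hml : (u + r) % r < r := Nat.mod_lt _ hr
  set q := (u + r) / r with hq
  set m := (u + r) % r with hm
  set P := r * q with hP
  omega


open scoped Classical in
lemma sdual_eq (n r k N : ℕ) [NeZero N] (hn : 0 < n) (hr : 0 < r) (hk : 0 < k)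
    (hrn : r * n = N + k) :
    SDual r k n N hn
      = ↑((PS n r k N hn).image (fun wc => fun j => wc.1 + (wc.2 j).val)) := by
  have hN : 0 < N := Nat.pos_of_ne_zero (NeZero.ne N)
  ext b
  simp only [SDual, Set.mem_setOf_eq, Finset.coe_image, Set.mem_image, Finset.mem_coe]
  constructor
  · rintro ⟨hmono, h1, hk', hspan, -, hIII⟩
    have hble : ∀ j, b ⟨0, hn⟩ ≤ b j := fun j => hmono (Fin.le_def.2 (Nat.zero_le _))
    have hlast : ∀ j : Fin n, b j ≤ b ⟨n - 1, Nat.sub_lt hn one_pos⟩ := fun j =>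
      hmono (Fin.le_def.2 (show j.1 ≤ n - 1 by have := j.2; omega))
    refine ⟨(b ⟨0, hn⟩, fun j =>
      (⟨b j - b ⟨0, hn⟩,
        lt_of_le_of_lt (Nat.sub_le_sub_right (hlast j) _) hspan⟩ : Fin N)), ?_, ?_⟩
    · simp only [PS, Finset.mem_filter, Finset.mem_product, Finset.mem_Icc, Finset.mem_univ,
        and_true]
      refine ⟨⟨h1, hk'⟩, ?_, ?_, ?_⟩
      · intro i j hij
        exact Fin.mk_le_mk.2 (Nat.sub_le_sub_right (hmono hij) _)
      · show b ⟨0, hn⟩ - b ⟨0, hn⟩ = 0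
        exact Nat.sub_self _
      · intro j hj
        have hj' : 0 < b j - b ⟨0, hn⟩ := hj
        have hlt : b ⟨0, hn⟩ < b j := by omega
        have h3 := hIII j hlt
        show b ⟨0, hn⟩ + (b j - b ⟨0, hn⟩) ≤ j.1 * r
        omega
    · funext j
      show b ⟨0, hn⟩ + (b j - b ⟨0, hn⟩) = b j
      exact Nat.add_sub_cancel' (hble j)
  · rintro ⟨⟨w, c⟩, hmem, rfl⟩
    simp only [PS, Finset.mem_filter, Finset.mem_product, Finset.mem_Icc, Finset.mem_univ,
      and_true] at hmem
    obtain ⟨⟨hw1, hwk⟩, hmono, hc00, hcond⟩ := hmem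
    refine ⟨?_, ?_, ?_, ?_, ?_, ?_⟩
    · intro i j hij
      exact Nat.add_le_add_left (Fin.le_def.1 (hmono hij)) w
    · show 1 ≤ w + (c ⟨0, hn⟩).val
      omega
    · show w + (c ⟨0, hn⟩).val ≤ k
      omega
    · show (w + (c ⟨n - 1, Nat.sub_lt hn one_pos⟩).val) - (w + (c ⟨0, hn⟩).val) < N
      have := (c ⟨n - 1, Nat.sub_lt hn one_pos⟩).isLt
      omega
    · obtain ⟨hq1, hq2⟩ := ceil_spec r w hr hw1
      obtain ⟨q, hqdef⟩ : ∃ q, q = (w + r - 1) / r := ⟨_, rfl⟩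
      rw [← hqdef] at hq1 hq2
      have hq0 : q ≠ 0 := by
        rintro h
        rw [h, Nat.mul_zero] at hq1
        omega
      have hkrn : k ≤ r * n := by rw [hrn]; omega
      have hqn : q < n + 1 := by
        refine lt_of_mul_lt_mul_left ?_ (Nat.zero_le r)
        have h6 : r * (n + 1) = r * n + r := by ring
        linarith
      have hqn' : q - 1 < n := by omega
      refine ⟨⟨q - 1, hqn'⟩, ?_, ?_⟩
      · show (q - 1) + 1 = (w + (c ⟨0, hn⟩).val + r - 1) / r
        have e : w + (c ⟨0, hn⟩).val + r - 1 = w + r - 1 := by omega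
        rw [e, ← hqdef]
        omega
      · have hval0 : (c ⟨q - 1, hqn'⟩).val = 0 := by
          by_contra hne
          have hpos : 0 < (c ⟨q - 1, hqn'⟩).val := Nat.pos_of_ne_zero hne
          have hx := hcond ⟨q - 1, hqn'⟩ hpos
          have hx' : w + (c ⟨q - 1, hqn'⟩).val ≤ (q - 1) * r := hx
          have e0 : q - 1 + 1 = q := by omega
          have e1 : (q - 1) * r + r = q * r := by
            calc (q - 1) * r + r = (q - 1 + 1) * r := by ring
              _ = q * r := by rw [e0]
          have e2 : q * r = r * q := Nat.mul_comm q r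
          linarith
        show w + (c ⟨q - 1, hqn'⟩).val = w + (c ⟨0, hn⟩).val
        rw [hval0, hc00]
    · intro j hj
      have hj' : w + (c ⟨0, hn⟩).val < w + (c j).val := hj
      have hpos : 0 < (c j).val := by omega
      have h3 := hcond j hpos
      show w + (c j).val ≤ j.1 * r
      omega

open scoped Classical in
lemma sdual_inj (n r k N : ℕ) (hn : 0 < n) :
    Set.InjOn (fun wc : ℕ × (Fin n → Fin N) => fun j => wc.1 + (wc.2 j).val)
      ↑(PS n r k N hn) := by
  intro p hp q hq heq
  have hp' := Finset.mem_coe.1 hp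
  have hq' := Finset.mem_coe.1 hq
  simp only [PS, Finset.mem_filter] at hp' hq'
  obtain ⟨-, -, hc00p, -⟩ := hp'
  obtain ⟨-, -, hc00q, -⟩ := hq'
  have h0 : p.1 + (p.2 ⟨0, hn⟩).val = q.1 + (q.2 ⟨0, hn⟩).val := congrFun heq ⟨0, hn⟩
  have hw : p.1 = q.1 := by omega
  have hc : p.2 = q.2 := by
    funext j
    apply Fin.ext
    have hj : p.1 + (p.2 j).val = q.1 + (q.2 j).val := congrFun heq j
    omega
  exact Prod.ext hw hc

end DP14

open scoped Classical in
/-- With `rn - k > 0`, the number of weakly increasing vectors in `S_n^{(r,k)}`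
equals `(k/(rn-k)) · binom(rn-k+n-1, n)`. -/
theorem stmt14 (n r k : ℕ) (hr : 0 < r) (hk : 0 < k) (hn : 0 < n)
    (hNpos : 0 < r * n - k) :
    (r * n - k) * (SDual r k n (r * n - k) hn).ncard
      = k * Nat.choose (r * n - k + n - 1) n := by
  have h1 : k ≤ r * n := by
    by_contra h
    push_neg at h
    have h2 : r * n - k = 0 := Nat.sub_eq_zero_of_le h.le
    rw [h2] at hNpos
    exact absurd hNpos (lt_irrefl 0)
  have hrn : r * n = (r * n - k) + k := (Nat.sub_add_cancel h1).symm
  haveI : NeZero (r * n - k) := ⟨hNpos.ne'⟩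
  rw [DP14.sdual_eq n r k (r * n - k) hn hr hk hrn, Set.ncard_coe_finset,
    Finset.card_image_of_injOn (DP14.sdual_inj n r k (r * n - k) hn)]
  exact DP14.PS_card n r k (r * n - k) hn hk hrn
end

section
/- Let n, r, k be positive integers with N := rn - k > 0. Suppose x = (x_0,...,x_{n-1}) ∈ [N]^n is weakly increasing with x_0 = 1, and x is not of the form satisfying x_j ≤ rj for all j ∈ [n-1]. Let Δ_j = rj - x_j. Let j* be the largest index in [n-1] with Δ_{j*} = min_{j' ∈ [n-1]} Δ_{j'}, and set i = 1 - x_{j*}. Then the weakly increasing rearrangement of (x + i mod N) satisfies: its smallest coordinate is 1, and its (u+1)-th coordinate is at most ru for all u ∈ [n-1]. -/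
/-- The representative in `[t] = {1, …, t}` of an integer `s` modulo `t > 0`. -/
def intModRep (s : ℤ) (t : ℕ) : ℕ := ((s - 1) % (t : ℤ)).toNat + 1

/-- Let `N = rn - k > 0` and let `x ∈ [N]^n` be weakly increasing with `x 0 = 1` and not
satisfying `x j ≤ rj` for all `j ∈ [n-1]`. With `Δ j = rj - x j`, let `j*` be the largest
index in `[n-1]` minimizing `Δ`, and put `i = 1 - x j*`. Then the weakly increasing
rearrangement of `(x + i mod N)` has smallest coordinate `1` and its `(u+1)`-th
coordinate is at most `ru` for all `u ∈ [n-1]`. -/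
theorem stmt15 (n r k N : ℕ) (hr : 0 < r) (hk : 0 < k) (hn : 0 < n)
    (hN : N = r * n - k) (hNpos : 0 < N)
    (x : Fin n → ℕ) (hmono : Monotone x) (hx0 : x ⟨0, hn⟩ = 1)
    (hmem : ∀ j, x j ∈ Finset.Icc 1 N)
    (hbad : ¬ ∀ j : Fin n, 1 ≤ j.val → x j ≤ r * j.val)
    (js : Fin n) (hjs1 : 1 ≤ js.val)
    (hjsmin : ∀ j : Fin n, 1 ≤ j.val →
      ((r : ℤ) * js.val - x js) ≤ ((r : ℤ) * j.val - x j))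
    (hjsmax : ∀ j : Fin n, 1 ≤ j.val →
      ((r : ℤ) * j.val - x j) = ((r : ℤ) * js.val - x js) → j ≤ js) :
    sortVec (fun j => intModRep ((x j : ℤ) + (1 - (x js : ℤ))) N) ⟨0, hn⟩ = 1 ∧
    ∀ u : Fin n, 1 ≤ u.val →
      sortVec (fun j => intModRep ((x j : ℤ) + (1 - (x js : ℤ))) N) u ≤ r * u.val := by
  have hxle : ∀ j, 1 ≤ x j ∧ x j ≤ N := fun j => Finset.mem_Icc.mp (hmem j)
  set c := x js with hc
  set y : Fin n → ℕ := fun j => intModRep ((x j : ℤ) + (1 - (c : ℤ))) N with hy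
  have hc1 := (hxle js).1
  have hc2 := (hxle js).2
  -- value of y
  have hyval : ∀ j : Fin n, (y j : ℤ)
      = if c ≤ x j then (x j : ℤ) - c + 1 else (x j : ℤ) - c + (N : ℤ) + 1 := by
    intro j
    have h1 := (hxle j).1
    have h2 := (hxle j).2
    simp only [hy, intModRep]
    have hs : (x j : ℤ) + (1 - (c : ℤ)) - 1 = (x j : ℤ) - c := by ring
    rw [hs]
    split
    · next h =>
      rw [Int.emod_eq_of_lt (by push_cast; omega) (by push_cast; omega)]
      push_cast; omega
    · next h =>
      have hlt : ¬ c ≤ x j := h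
      rw [show ((x j : ℤ) - c) % N = ((x j : ℤ) - c + N) % N from by
          rw [show (x j : ℤ) - c + N = (x j : ℤ) - c + N * 1 by ring, Int.add_mul_emod_self_left],
        Int.emod_eq_of_lt (by push_cast; omega) (by push_cast; omega)]
      push_cast; omega
  -- x js exceeds r * js (fact B)
  push_neg at hbad
  obtain ⟨j₁, hj₁1, hj₁⟩ := hbad
  have hB : (r : ℤ) * js.val < (c : ℤ) := by
    have h := hjsmin j₁ hj₁1
    have : (x j₁ : ℤ) > (r : ℤ) * j₁.val := by exact_mod_cast hj₁
    linarith
  -- fact A : entries before js are strictly below c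
  have hA : ∀ j : Fin n, j.val < js.val → x j < c := by
    intro j hjlt
    rcases Nat.eq_zero_or_pos j.val with h0 | h1
    · have : j = ⟨0, hn⟩ := Fin.ext h0
      rw [this, hx0]
      have : (1 : ℤ) ≤ (r : ℤ) * js.val := by
        have : (1 : ℤ) ≤ (r : ℤ) := by exact_mod_cast hr
        have : (1 : ℤ) ≤ (js.val : ℤ) := by exact_mod_cast hjs1
        nlinarith
      have : (1 : ℤ) < (c : ℤ) := by linarith
      exact_mod_cast this
    · by_contra hcon
      push_neg at hcon
      have h := hjsmin j h1
      have hjr : (r : ℤ) * j.val < (r : ℤ) * js.val := by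
        have h1' : (1 : ℤ) ≤ (r : ℤ) := by exact_mod_cast hr
        have h2' : (j.val : ℤ) < (js.val : ℤ) := by exact_mod_cast hjlt
        nlinarith
      have hcx : (c : ℤ) ≤ (x j : ℤ) := by exact_mod_cast hcon
      linarith
  have hval2 : ∀ j : Fin n, js.val ≤ j.val → (y j : ℤ) = (x j : ℤ) - c + 1 := by
    intro j hj
    rw [hyval j, if_pos (hmono (show js ≤ j from hj))]
  have hval1 : ∀ j : Fin n, j.val < js.val → (y j : ℤ) = (x j : ℤ) - c + (N : ℤ) + 1 := by
    intro j hj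
    rw [hyval j, if_neg (by exact not_le.mpr (hA j hj))]
  -- the rotation permutation
  haveI : NeZero n := ⟨hn.ne'⟩
  set σ : Equiv.Perm (Fin n) := Equiv.addLeft js with hσ
  have hadd : ∀ u : Fin n, ((js.val + u.val < n → (js + u).val = js.val + u.val) ∧
      (n ≤ js.val + u.val → (js + u).val = js.val + u.val - n)) := by
    intro u
    constructor
    · intro h
      rw [Fin.val_add, Nat.mod_eq_of_lt h]
    · intro h
      rw [Fin.val_add, Nat.mod_eq_sub_mod h, Nat.mod_eq_of_lt (by omega)]
  have hmono' : Monotone (y ∘ σ) := by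
    intro u v huv
    simp only [Function.comp, hσ, Equiv.coe_addLeft]
    have huv' : u.val ≤ v.val := huv
    have hyu := hadd u
    have hyv := hadd v
    rcases lt_or_ge (js.val + u.val) n with hu | hu <;>
      rcases lt_or_ge (js.val + v.val) n with hv | hv
    · -- both no wrap
      have e1 := hval2 (js + u) (by rw [hyu.1 hu]; omega)
      have e2 := hval2 (js + v) (by rw [hyv.1 hv]; omega)
      have hle : x (js + u) ≤ x (js + v) := hmono (by
        rw [Fin.le_def, hyu.1 hu, hyv.1 hv]; omega)
      have : (y (js + u) : ℤ) ≤ (y (js + v) : ℤ) := by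
        rw [e1, e2]; push_cast; omega
      exact_mod_cast this
    · -- u no wrap, v wraps
      have e1 := hval2 (js + u) (by rw [hyu.1 hu]; omega)
      have e2 := hval1 (js + v) (by rw [hyv.2 hv]; omega)
      have h1 := (hxle (js + u)).2
      have h2 := (hxle (js + v)).1
      have : (y (js + u) : ℤ) ≤ (y (js + v) : ℤ) := by
        rw [e1, e2]; push_cast; omega
      exact_mod_cast this
    · omega
    · -- both wrap
      have e1 := hval1 (js + u) (by rw [hyu.2 hu]; omega)
      have e2 := hval1 (js + v) (by rw [hyv.2 hv]; omega)
      have hle : x (js + u) ≤ x (js + v) := hmono (by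
        rw [Fin.le_def, hyu.2 hu, hyv.2 hv]; omega)
      have : (y (js + u) : ℤ) ≤ (y (js + v) : ℤ) := by
        rw [e1, e2]; push_cast; omega
      exact_mod_cast this
  have hsort : ∀ u : Fin n, sortVec y u = y (js + u) := by
    have h := Tuple.comp_sort_eq_comp_iff_monotone.mpr hmono'
    intro u
    have := congrFun h u
    simp only [Function.comp, hσ, Equiv.coe_addLeft] at this
    simpa [sortVec] using this.symm
  have hkrn : k < r * n := by omega
  have hNZ : (N : ℤ) = (r : ℤ) * n - k := by push_cast [hN]; omega
  refine ⟨?_, ?_⟩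
  · rw [hsort ⟨0, hn⟩]
    have hjsid : js + (⟨0, hn⟩ : Fin n) = js := by
      apply Fin.ext
      rw [(hadd ⟨0, hn⟩).1 (by simpa using js.isLt)]
      simp
    rw [hjsid]
    have := hval2 js le_rfl
    have : (y js : ℤ) = 1 := by rw [this]; omega
    exact_mod_cast this
  · intro u hu
    rw [hsort u]
    have hju := hadd u
    rcases lt_or_ge (js.val + u.val) n with hlt | hge
    · -- no wrap : strict minimality
      set j : Fin n := js + u with hj
      have hjv : j.val = js.val + u.val := hju.1 hlt
      have hj1 : 1 ≤ j.val := by omega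
      have hmin := hjsmin j hj1
      have hne : ¬ ((r : ℤ) * j.val - x j = (r : ℤ) * js.val - x js) := by
        intro heq
        have := hjsmax j hj1 heq
        rw [Fin.le_def, hjv] at this
        omega
      have hstrict : (r : ℤ) * js.val - c + 1 ≤ (r : ℤ) * j.val - x j := by
        rcases lt_or_eq_of_le hmin with h | h
        · omega
        · exact absurd h.symm hne
      have hjcast : (j.val : ℤ) = (js.val : ℤ) + u.val := by exact_mod_cast hjv
      have hexp : (r : ℤ) * j.val = (r : ℤ) * js.val + (r : ℤ) * u.val := by
        rw [hjcast]; ring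
      have e := hval2 j (by omega)
      have : (y j : ℤ) ≤ (r : ℤ) * u.val := by
        rw [e]; linarith
      exact_mod_cast this
    · -- wrap
      set j : Fin n := js + u with hj
      have hjv : j.val = js.val + u.val - n := hju.2 hge
      have hjlt : j.val < js.val := by omega
      have e := hval1 j hjlt
      have hjcast : (j.val : ℤ) = (js.val : ℤ) + u.val - n := by
        have : js.val + u.val - n + n = js.val + u.val := by omega
        push_cast
        omega
      rcases Nat.eq_zero_or_pos j.val with h0 | h1
      · -- j = 0 case
        have hx1 : x j = 1 := by rw [show j = ⟨0, hn⟩ from Fin.ext h0]; exact hx0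
        have huval : (u.val : ℤ) = (n : ℤ) - js.val := by omega
        have hexp : (r : ℤ) * u.val = (r : ℤ) * n - (r : ℤ) * js.val := by
          rw [huval]; ring
        have : (y j : ℤ) ≤ (r : ℤ) * u.val := by
          rw [e, hx1]
          have hk' : (1 : ℤ) ≤ (k : ℤ) := by exact_mod_cast hk
          push_cast
          linarith
        exact_mod_cast this
      · have hmin := hjsmin j h1
        have hexp : (r : ℤ) * j.val = (r : ℤ) * js.val + (r : ℤ) * u.val - (r : ℤ) * n := by
          rw [hjcast]; ring
        have hk' : (1 : ℤ) ≤ (k : ℤ) := by exact_mod_cast hk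
        have : (y j : ℤ) ≤ (r : ℤ) * u.val := by
          rw [e]; linarith
        exact_mod_cast this
end

section
/- Fix a positive integer r and define F_n^{(r)} = F_n^{(r,1)} ∈ Λ as the Frobenius characteristic of (r,1)-parking functions, equal to Σ over weakly increasing (r,1)-parking functions b of length n of h_{m_1(b)} h_{m_2(b)} ⋯ where m_i(b) is the number of i's in b. For a partition λ set F_λ^{(r)} = Π_i F_{λ_i}^{(r)}. Then for each n ≥ 0, the set {F_λ^{(r)} : λ ⊢ n} is a ℤ-basis of the additive group Λ^n of homogeneous degree-n symmetric functions with integer coefficients. -/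
/-!
A weakly increasing parking function other than `1, 1, …, 1` starts with `1` and takes some
other value too, so its term `h_{m₁(b)} h_{m₂(b)} ⋯` is an `h_ν` with at least two parts:
`F_m = h_m + (ℤ-combination of h_ν, ℓ(ν) ≥ 2)`. The number of parts is additive under
multiplication, so `F_μ = h_μ + (ℤ-combination of h_ν, ℓ(ν) > ℓ(μ))`. The transition matrix
from `{F_μ}` to the basis `{h_μ}` is therefore unitriangular, hence invertible over `ℤ`.
-/

noncomputable section

/-- A model of the ring of symmetric functions `Λ` over `ℤ`: the polynomial ring on the
(algebraically independent) complete homogeneous symmetric functions `h₁, h₂, …`. -/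
abbrev LambdaModel : Type := MvPolynomial {i : ℕ // 0 < i} ℤ

/-- The complete homogeneous symmetric function `h_m` in the model (`h_0 = 1`). -/
def Hgen (m : ℕ) : LambdaModel :=
  if h : 0 < m then MvPolynomial.X ⟨m, h⟩ else 1

/-- `h_μ = h_{μ₁} h_{μ₂} ⋯` for a partition `μ`. -/
def hPart {n : ℕ} (μ : n.Partition) : LambdaModel := (μ.parts.map Hgen).prod

/-- The `Finset` of weakly increasing `(r,1)`-parking functions of length `n`. -/
def WIPFfinset (r n : ℕ) : Finset (Fin n → ℕ) :=
  (Fintype.piFinset fun i : Fin n => Finset.Icc 1 (1 + i.val * r)).filter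
    (fun b => ∀ i j : Fin n, i ≤ j → b i ≤ b j)

/-- The parking function symmetric function `F_n^{(r)} = F_n^{(r,1)}`: the sum over all
weakly increasing `(r,1)`-parking functions `b` of length `n` of `h_{m₁(b)} h_{m₂(b)} ⋯`,
where `m_i(b)` is the number of entries of `b` equal to `i`. -/
def Fpf (r n : ℕ) : LambdaModel :=
  ∑ b ∈ WIPFfinset r n,
    ∏ i ∈ Finset.range (1 + n * r + 1), Hgen ((Finset.univ.filter fun j => b j = i).card)

/-- `F_λ^{(r)} = F_{λ₁}^{(r)} F_{λ₂}^{(r)} ⋯`. -/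
def FpfPart (r : ℕ) {n : ℕ} (μ : n.Partition) : LambdaModel := (μ.parts.map (Fpf r)).prod

section Unitriangular

open Submodule Set

variable {R M ι α : Type*} [Ring R] [AddCommGroup M] [Module R M] [Preorder α]
  {v w : ι → M} (ℓ : ι → α)

theorem span_range_eq_of_sub_mem_span_gt [Finite ι]
    (h : ∀ i, v i - w i ∈ span R (w '' {j | ℓ i < ℓ j})) :
    span R (range v) = span R (range w) := by
  refine le_antisymm (span_le.2 ?_) (span_le.2 ?_)
  · rintro _ ⟨i, rfl⟩
    simpa using add_mem (span_mono (image_subset_range _ _) (h i)) (subset_span ⟨i, rfl⟩)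
  · have wf : WellFounded fun i j : ι => ℓ j < ℓ i :=
      @Finite.wellFounded_of_trans_of_irrefl _ _ _ ⟨fun _ _ _ h₁ h₂ => h₂.trans h₁⟩
        ⟨fun _ => lt_irrefl _⟩
    rintro _ ⟨i, rfl⟩
    induction i using wf.induction with
    | _ i ih =>
      have hlower : v i - w i ∈ span R (range v) :=
        span_le.2 (by rintro _ ⟨j, hj, rfl⟩; exact ih j hj) (h i)
      simpa using sub_mem (subset_span (mem_range_self i)) hlower

theorem LinearIndependent.of_sub_mem_span_gt (hw : LinearIndependent R w)
    (h : ∀ i, v i - w i ∈ span R (w '' {j | ℓ i < ℓ j})) : LinearIndependent R v := by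
  rw [linearIndependent_iff]
  intro l hl
  by_contra hl0
  -- `w i₀`, for `i₀` of minimal `ℓ` in the support, occurs in no correction term `v i - w i`.
  obtain ⟨i₀, hi₀, hmin⟩ := l.support.exists_minimalFor ℓ (Finsupp.support_nonempty_iff.2 hl0)
  have hmem : Finsupp.linearCombination R w l ∈
      span R (w '' {j | ∃ i ∈ l.support, ℓ i < ℓ j}) := by
    have : Finsupp.linearCombination R w l = ∑ i ∈ l.support, l i • -(v i - w i) := by
      rw [Finsupp.linearCombination_apply, Finsupp.sum] at hl ⊢
      simp only [neg_sub, smul_sub, Finset.sum_sub_distrib, hl, sub_zero]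
    rw [this]
    refine sum_mem fun i hi => smul_mem _ _ (neg_mem (span_mono ?_ (h i)))
    exact image_mono fun j hj => ⟨i, hi, hj⟩
  obtain ⟨l', hl'S, hl'⟩ := (Finsupp.mem_span_image_iff_linearCombination R).1 hmem
  obtain ⟨i, hi, hlt⟩ := hl'S ((hw hl').symm ▸ hi₀)
  exact hlt.not_ge (hmin hi hlt.le)

end Unitriangular

theorem MvPolynomial.prod_map_X_eq_monomial {σ R : Type*} [CommSemiring R] [DecidableEq σ]
    (s : Multiset σ) : (s.map X).prod = monomial (R := R) (Multiset.toFinsupp s) 1 := by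
  induction s using Multiset.induction with
  | empty => simp
  | cons a s ih =>
    simp [ih, X, monomial_mul, ← Multiset.singleton_add, Multiset.toFinsupp_add]

theorem linearIndependent_hPart (n : ℕ) :
    LinearIndependent ℤ (fun μ : n.Partition => hPart μ) := by
  have hrename (μ : n.Partition) : MvPolynomial.rename Subtype.val (hPart μ) =
      MvPolynomial.basisMonomials ℕ ℤ (Multiset.toFinsupp μ.parts) := by
    rw [MvPolynomial.coe_basisMonomials, hPart, map_multiset_prod, Multiset.map_map]
    refine (congrArg _ (Multiset.map_congr rfl fun p hp => ?_)).trans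
      (MvPolynomial.prod_map_X_eq_monomial _)
    simp [Hgen, μ.parts_pos hp]
  refine LinearIndependent.of_comp (MvPolynomial.rename (R := ℤ) Subtype.val).toLinearMap ?_
  have hcomp : (MvPolynomial.rename Subtype.val).toLinearMap ∘ (fun μ : n.Partition => hPart μ) =
      MvPolynomial.basisMonomials ℕ ℤ ∘ fun μ => Multiset.toFinsupp μ.parts := funext hrename
  rw [hcomp]
  exact (MvPolynomial.basisMonomials ℕ ℤ).linearIndependent.comp _
    (fun μ ν h => Nat.Partition.ext (Multiset.toFinsupp.injective h))

def spanHLengthGE (n k : ℕ) : Submodule ℤ LambdaModel :=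
  Submodule.span ℤ (hPart '' {ν : n.Partition | k ≤ ν.parts.card})

theorem spanHLengthGE_anti (n : ℕ) : Antitone (spanHLengthGE n) :=
  fun _ _ hkk' => Submodule.span_mono (Set.image_mono fun _ hν => le_trans hkk' hν)

theorem hPart_mem_spanHLengthGE {n k : ℕ} {μ : n.Partition} (h : k ≤ μ.parts.card) :
    hPart μ ∈ spanHLengthGE n k :=
  Submodule.subset_span ⟨μ, h, rfl⟩

theorem prod_map_Hgen_mem_spanHLengthGE (u : Multiset ℕ) :
    (u.map Hgen).prod ∈ spanHLengthGE u.sum (u.filter (· ≠ 0)).card := by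
  have hzeros : ((u.filter (· = 0)).map Hgen).prod = 1 := by
    rw [Multiset.prod_eq_one]
    intro x hx
    obtain ⟨p, hp, rfl⟩ := Multiset.mem_map.1 hx
    rw [(Multiset.mem_filter.1 hp).2, Hgen, dif_neg (lt_irrefl 0)]
  have : (u.map Hgen).prod = hPart (Nat.Partition.ofMultiset u) := by
    rw [← Multiset.filter_add_not (· = 0) u, Multiset.map_add, Multiset.prod_add, hzeros, one_mul]
    simp [hPart]
  rw [this]
  exact hPart_mem_spanHLengthGE le_rfl

theorem prod_map_Hgen_mem_spanHLengthGE_of_pos {s : Multiset ℕ} (hs : ∀ a ∈ s, 0 < a) :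
    (s.map Hgen).prod ∈ spanHLengthGE s.sum (Multiset.card s) := by
  simpa [Multiset.filter_eq_self.2 fun a ha => (hs a ha).ne'] using
    prod_map_Hgen_mem_spanHLengthGE s

theorem Hgen_mem_spanHLengthGE {m : ℕ} (hm : 0 < m) : Hgen m ∈ spanHLengthGE m 1 := by
  simpa using prod_map_Hgen_mem_spanHLengthGE_of_pos (s := {m}) (by simpa using hm)

theorem mul_mem_spanHLengthGE {m m' k k' : ℕ} {x y : LambdaModel} (hx : x ∈ spanHLengthGE m k)
    (hy : y ∈ spanHLengthGE m' k') : x * y ∈ spanHLengthGE (m + m') (k + k') := by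
  have hxy := Submodule.mul_mem_mul hx hy
  rw [spanHLengthGE, spanHLengthGE, Submodule.span_mul_span] at hxy
  refine Submodule.span_le.2 ?_ hxy
  rintro _ ⟨_, ⟨μ, hμ, rfl⟩, _, ⟨ν, hν, rfl⟩, rfl⟩
  have hpos : ∀ a ∈ μ.parts + ν.parts, 0 < a := by
    simpa [or_imp, forall_and] using ⟨fun a => μ.parts_pos (i := a), fun a => ν.parts_pos (i := a)⟩
  have := prod_map_Hgen_mem_spanHLengthGE_of_pos hpos
  rw [Multiset.sum_add, μ.parts_sum, ν.parts_sum, Multiset.card_add, Multiset.map_add,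
    Multiset.prod_add] at this
  exact spanHLengthGE_anti _ (add_le_add hμ hν) this

open Finset in
theorem prod_Hgen_card_fiber_mem_spanHLengthGE {ι : Type*} [Fintype ι] (b : ι → ℕ)
    {t : Finset ℕ} (hb : ∀ j, b j ∈ t) :
    ∏ i ∈ t, Hgen #{j | b j = i} ∈ spanHLengthGE (Fintype.card ι) #(univ.image b) := by
  have hsum : ∑ i ∈ t, #{j | b j = i} = Fintype.card ι := by
    simpa using (card_eq_sum_card_fiberwise fun j (_ : j ∈ univ) => hb j).symm
  have hvalues : {i ∈ t | #{j | b j = i} ≠ 0} = univ.image b := by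
    ext i
    simp only [mem_filter, mem_image, mem_univ, true_and, ne_eq, card_eq_zero,
      filter_eq_empty_iff, not_forall, not_not, exists_prop]
    exact ⟨fun ⟨_, j, hj⟩ => ⟨j, hj⟩, fun ⟨j, hj⟩ => ⟨hj ▸ hb j, j, hj⟩⟩
  have := prod_map_Hgen_mem_spanHLengthGE (t.val.map fun i => #{j | b j = i})
  rw [Multiset.map_map, ← prod_eq_multiset_prod, ← sum_eq_multiset_sum, hsum,
    Multiset.filter_map, Multiset.card_map] at this
  rw [← hvalues]
  exact this

section ParkingFunctions

open Finset

variable {r m : ℕ} {b : Fin m → ℕ}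

theorem one_mem_WIPFfinset (r m : ℕ) : (1 : Fin m → ℕ) ∈ WIPFfinset r m := by
  simp [WIPFfinset]

theorem mem_Icc_of_mem_WIPFfinset (hb : b ∈ WIPFfinset r m) (j : Fin m) :
    b j ∈ Icc 1 (1 + j.val * r) :=
  Fintype.mem_piFinset.1 (mem_filter.1 hb).1 j

theorem apply_mem_range_of_mem_WIPFfinset (hb : b ∈ WIPFfinset r m) (j : Fin m) :
    b j ∈ range (1 + m * r + 1) := by
  have hj := mem_Icc.1 (mem_Icc_of_mem_WIPFfinset hb j)
  have : j.val * r ≤ m * r := Nat.mul_le_mul_right r j.isLt.le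
  rw [mem_range]
  omega

theorem prod_Hgen_card_fiber_one :
    ∏ i ∈ range (1 + m * r + 1), Hgen #{j | (1 : Fin m → ℕ) j = i} = Hgen m := by
  rw [prod_eq_single_of_mem 1 (by simp)]
  · simp
  · intro i _ hi
    simp [Ne.symm hi, Hgen]

theorem prod_Hgen_card_fiber_mem_of_ne_one (hb : b ∈ WIPFfinset r m) (hb1 : b ≠ 1) :
    ∏ i ∈ range (1 + m * r + 1), Hgen #{j | b j = i} ∈ spanHLengthGE m 2 := by
  obtain ⟨j₀, hj₀⟩ : ∃ j₀, b j₀ ≠ 1 := by simpa [funext_iff] using hb1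
  have hm : 0 < m := j₀.pos
  have hfirst : b ⟨0, hm⟩ = 1 := by simpa using mem_Icc_of_mem_WIPFfinset hb ⟨0, hm⟩
  have htwo : 1 < #(univ.image b) :=
    one_lt_card.2 ⟨1, hfirst ▸ mem_image_of_mem b (mem_univ _), b j₀,
      mem_image_of_mem b (mem_univ _), hj₀.symm⟩
  have := prod_Hgen_card_fiber_mem_spanHLengthGE b (apply_mem_range_of_mem_WIPFfinset hb)
  rw [Fintype.card_fin] at this
  exact spanHLengthGE_anti m htwo this

theorem Fpf_sub_Hgen_mem_spanHLengthGE (r m : ℕ) : Fpf r m - Hgen m ∈ spanHLengthGE m 2 := by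
  rw [Fpf, ← add_sum_erase _ _ (one_mem_WIPFfinset r m), prod_Hgen_card_fiber_one,
    add_sub_cancel_left]
  exact Submodule.sum_mem _ fun b hb =>
    prod_Hgen_card_fiber_mem_of_ne_one (mem_of_mem_erase hb) (ne_of_mem_erase hb)

theorem Fpf_mem_spanHLengthGE (r : ℕ) (hm : 0 < m) : Fpf r m ∈ spanHLengthGE m 1 := by
  simpa using Submodule.add_mem _ (spanHLengthGE_anti m one_le_two
    (Fpf_sub_Hgen_mem_spanHLengthGE r m)) (Hgen_mem_spanHLengthGE hm)

end ParkingFunctions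

theorem prod_map_Fpf_sub_prod_map_Hgen_mem_spanHLengthGE (r : ℕ) {s : Multiset ℕ}
    (hs : ∀ a ∈ s, 0 < a) :
    (s.map (Fpf r)).prod - (s.map Hgen).prod ∈
      spanHLengthGE s.sum (Multiset.card s + 1) := by
  induction s using Multiset.induction with
  | empty => simp
  | cons a s ih =>
    have ha : 0 < a := hs a (Multiset.mem_cons_self a s)
    have hs' : ∀ b ∈ s, 0 < b := fun b hb => hs b (Multiset.mem_cons_of_mem hb)
    simp only [Multiset.map_cons, Multiset.prod_cons, Multiset.sum_cons, Multiset.card_cons]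
    rw [show ∀ x x' y y' : LambdaModel, x' * y' - x * y = x' * (y' - y) + (x' - x) * y by
      intros; ring]
    refine add_mem (spanHLengthGE_anti _ ?_ (mul_mem_spanHLengthGE
      (Fpf_mem_spanHLengthGE r ha) (ih hs'))) (spanHLengthGE_anti _ ?_ (mul_mem_spanHLengthGE
      (Fpf_sub_Hgen_mem_spanHLengthGE r a) (prod_map_Hgen_mem_spanHLengthGE_of_pos hs'))) <;>
    omega

theorem stmt17_general (r : ℕ) (n : ℕ) :
    LinearIndependent ℤ (fun μ : n.Partition => FpfPart r μ) ∧
    Submodule.span ℤ (Set.range fun μ : n.Partition => FpfPart r μ) =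
      Submodule.span ℤ (Set.range fun μ : n.Partition => hPart μ) := by
  have hunitriangular (μ : n.Partition) : FpfPart r μ - hPart μ ∈
      Submodule.span ℤ (hPart '' {ν : n.Partition | μ.parts.card < ν.parts.card}) := by
    have := prod_map_Fpf_sub_prod_map_Hgen_mem_spanHLengthGE r fun a => μ.parts_pos (i := a)
    -- `spanHLengthGE n (k + 1)` is this span by definition, as `k < l` unfolds to `k + 1 ≤ l`.
    rwa [μ.parts_sum] at this
  exact ⟨(linearIndependent_hPart n).of_sub_mem_span_gt _ hunitriangular,
    span_range_eq_of_sub_mem_span_gt _ hunitriangular⟩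

/-- For each `n ≥ 0`, the family `{F_λ^{(r)} : λ ⊢ n}` is a `ℤ`-basis of the homogeneous
degree-`n` component `Λⁿ` of the ring of symmetric functions, i.e. it is linearly
independent and spans the same `ℤ`-module as `{h_λ : λ ⊢ n}`. -/
theorem stmt17 (r : ℕ) (hr : 0 < r) (n : ℕ) :
    LinearIndependent ℤ (fun μ : n.Partition => FpfPart r μ) ∧
    Submodule.span ℤ (Set.range fun μ : n.Partition => FpfPart r μ) =
      Submodule.span ℤ (Set.range fun μ : n.Partition => hPart μ) :=
  stmt17_general r n
end
end

section
/- Let λ ⊢ n be a partition, r, r_1, r_2, ... positive integers, and k, k_1, k_2, ... integers. With F_n^{(r,k)} := (k/(rn+k))·[t^n] H(t)^{rn+k} in the ring of symmetric functions (H(t) = Σ h_n t^n), the Hall scalar product satisfies ⟨F_n^{(r,k)}, Π_i F_{λ_i}^{(r_i,k_i)}⟩ = (k/(rn+k)) · Π_i (k_i/(r_iλ_i+k_i)) · binom((rn+k)(r_iλ_i+k_i) + λ_i - 1, λ_i). -/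
/-!
With `a = rn + k`, `F_n^{(r,k)} = k Σ_{μ ⊢ n} z_μ⁻¹ a^{ℓ(μ)-1} p_μ`, so by
`⟨p_λ, p_μ⟩ = z_λ δ_{λμ}` pairing `F_n^{(r,k)}` with anything of degree `n` is `k/a`
times the specialization `p_i ↦ a`. The product `Π_i F_{λ_i}^{(r_i,k_i)}` has degree `n` and
the specialization is multiplicative, so with `b_i = r_iλ_i + k_i` each factor contributes
`(k_i/b_i) Σ_{μ ⊢ λ_i} z_μ⁻¹ (a b_i)^{ℓ(μ)}`. Finally `c_N(y) = Σ_{μ ⊢ N} z_μ⁻¹ y^{ℓ(μ)}`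
equals `multichoose y N = binom(y+N-1, N)`: summing over the parts of `μ` gives
`N c_N = y Σ_{s<N} c_s`, a recursion that `multichoose` satisfies too.
-/
noncomputable section

/-- A model of the ring of symmetric functions `Λ` over `ℚ`: the polynomial ring on the
(algebraically independent) power sums `p₁, p₂, …`. -/
abbrev LambdaQ : Type := MvPolynomial {i : ℕ // 0 < i} ℚ

/-- The power sum `p_m` in the model (`p_0 = 1` by convention here; parts are positive). -/
def Pgen (m : ℕ) : LambdaQ :=
  if h : 0 < m then MvPolynomial.X ⟨m, h⟩ else 1

/-- `p_μ = p_{μ₁} p_{μ₂} ⋯` for a partition `μ`. -/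
def pPart {n : ℕ} (μ : n.Partition) : LambdaQ := (μ.parts.map Pgen).prod

/-- `z_μ = ∏ i, i^{d_i(μ)} · d_i(μ)!`. -/
def zPart {n : ℕ} (μ : n.Partition) : ℚ :=
  ∏ i ∈ Finset.range (n + 1),
    ((i : ℚ) ^ (μ.parts.count i) * ((μ.parts.count i).factorial : ℚ))

/-- The `z`-weight of a monomial exponent `d`, i.e. `z_λ` for the partition `λ` with
`d i` parts equal to `i`. -/
def zMon (d : {i : ℕ // 0 < i} →₀ ℕ) : ℚ :=
  d.prod fun i m => (i.val : ℚ) ^ m * (Nat.factorial m : ℚ)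

/-- The Hall scalar product on symmetric functions, characterized by
`⟨p_λ, p_μ⟩ = z_λ δ_{λμ}`, computed in the model via monomials in the `p`'s. -/
def hall (f g : LambdaQ) : ℚ :=
  ∑ d ∈ f.support, f.coeff d * g.coeff d * zMon d

/-- `F_n^{(r,k)} = k · Σ_{λ ⊢ n} z_λ⁻¹ (rn+k)^{ℓ(λ)-1} p_λ`
(equivalently `(k/(rn+k))·[tⁿ] H(t)^{rn+k}`), defined for any integer `k`. -/
def Frk (r : ℕ) (k : ℤ) (n : ℕ) : LambdaQ :=
  (k : ℚ) • ∑ μ : n.Partition,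
    ((zPart μ)⁻¹ * ((((r * n : ℤ) + k : ℤ) : ℚ)) ^ (μ.parts.card - 1)) • pPart μ

namespace Ring

theorem sum_range_succ_multichoose {R : Type*} [NonAssocSemiring R] [Pow R ℕ] [NatPowAssoc R]
    [BinomialRing R] (r : R) (k : ℕ) :
    ∑ s ∈ Finset.range (k + 1), multichoose r s = multichoose (r + 1) k := by
  induction k with
  | zero => simp
  | succ k ih => rw [Finset.sum_range_succ, ih, multichoose_succ_succ, add_comm]

theorem succ_mul_multichoose_succ {R : Type*} [Field R] [CharZero R] [BinomialRing R] (r : R)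
    (k : ℕ) : (k + 1 : R) * multichoose r (k + 1) = r * multichoose (r + 1) k := by
  have hasc := factorial_nsmul_multichoose_eq_ascPochhammer r (k + 1)
  rw [ascPochhammer_succ_left, Polynomial.smeval_mul, Polynomial.smeval_X,
    Polynomial.smeval_comp, Polynomial.smeval_add, Polynomial.smeval_X, Polynomial.smeval_one,
    ← factorial_nsmul_multichoose_eq_ascPochhammer] at hasc
  simp only [nsmul_eq_mul, npow_one, npow_zero, one_smul, Nat.factorial_succ, Nat.cast_mul] at hasc
  have hk : (k.factorial : R) ≠ 0 := Nat.cast_ne_zero.2 k.factorial_ne_zero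
  apply mul_left_cancel₀ hk
  push_cast at hasc
  linear_combination hasc

end Ring

lemma Nat.Partition.card_parts_ne_zero {n : ℕ} (hn : 0 < n) (μ : n.Partition) :
    μ.parts.card ≠ 0 := by
  intro h
  rw [← μ.parts_sum, Multiset.card_eq_zero.1 h, Multiset.sum_zero] at hn
  exact hn.false

lemma Nat.Partition.toFinset_parts_subset_range {n : ℕ} (μ : n.Partition) :
    μ.parts.toFinset ⊆ Finset.range (n + 1) := fun i hi => by
  have := Multiset.le_sum_of_mem (Multiset.mem_toFinset.1 hi)
  rw [μ.parts_sum] at this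
  exact Finset.mem_range.2 (Nat.lt_succ_of_le this)

lemma Nat.Partition.sum_range_mul_count {n : ℕ} (μ : n.Partition) :
    ∑ j ∈ Finset.range (n + 1), j * μ.parts.count j = n := by
  conv_rhs => rw [← μ.parts_sum,
    Finset.sum_multiset_count_of_subset _ _ μ.toFinset_parts_subset_range]
  simp only [smul_eq_mul, mul_comm]

def Nat.Partition.insertPart {n j : ℕ} (hj : 0 < j) (hjn : j ≤ n) (ν : (n - j).Partition) :
    n.Partition where
  parts := j ::ₘ ν.parts
  parts_pos hi := (Multiset.mem_cons.1 hi).elim (· ▸ hj) ν.parts_pos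
  parts_sum := by rw [Multiset.sum_cons, ν.parts_sum]; omega

def Nat.Partition.union {a b : ℕ} (μ : a.Partition) (ν : b.Partition) : (a + b).Partition where
  parts := μ.parts + ν.parts
  parts_pos hi := (Multiset.mem_add.1 hi).elim μ.parts_pos ν.parts_pos
  parts_sum := by rw [Multiset.sum_add, μ.parts_sum, ν.parts_sum]

def zMultiset (s : Multiset ℕ) : ℚ :=
  ∏ i ∈ s.toFinset, (i : ℚ) ^ s.count i * (s.count i).factorial

lemma zMultiset_eq_prod_of_subset {s : Multiset ℕ} {S : Finset ℕ} (hS : s.toFinset ⊆ S) :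
    zMultiset s = ∏ i ∈ S, (i : ℚ) ^ s.count i * (s.count i).factorial :=
  Finset.prod_subset hS fun i _ hi => by simp [Multiset.count_eq_zero_of_notMem (by simpa using hi)]

lemma zMultiset_cons (j : ℕ) (s : Multiset ℕ) :
    zMultiset (j ::ₘ s) = j * (s.count j + 1) * zMultiset s := by
  have hS : s.toFinset ⊆ (j ::ₘ s).toFinset := by simp [Finset.subset_insert]
  have hj : j ∈ (j ::ₘ s).toFinset := by simp
  rw [zMultiset, zMultiset_eq_prod_of_subset hS, ← Finset.mul_prod_erase _ _ hj,
    ← Finset.mul_prod_erase _ _ hj,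
    Finset.prod_congr rfl fun i hi => by rw [Multiset.count_cons_of_ne (Finset.ne_of_mem_erase hi)]]
  simp only [Multiset.count_cons_self, pow_succ, Nat.factorial_succ]
  push_cast
  ring

lemma zMultiset_ne_zero {s : Multiset ℕ} (hs : ∀ i ∈ s, 0 < i) : zMultiset s ≠ 0 :=
  Finset.prod_ne_zero_iff.2 fun i hi => by
    have := hs i (Multiset.mem_toFinset.1 hi)
    positivity

lemma zPart_eq_zMultiset {n : ℕ} (μ : n.Partition) : zPart μ = zMultiset μ.parts :=
  (zMultiset_eq_prod_of_subset μ.toFinset_parts_subset_range).symm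

def partitionZSum (y : ℚ) (n : ℕ) : ℚ :=
  ∑ μ : n.Partition, (zMultiset μ.parts)⁻¹ * y ^ μ.parts.card

lemma partitionZSum_zero (y : ℚ) : partitionZSum y 0 = 1 := by
  simp [partitionZSum, zMultiset]

-- Inserting a part `j` into `ν ⊢ n - j` multiplies `z_ν` by `j (m_j(ν) + 1)`.
lemma sum_mul_count_mul_zInv_mul_pow (y : ℚ) {n j : ℕ} (hj : 0 < j) (hjn : j ≤ n) :
    ∑ μ : n.Partition, j * μ.parts.count j * ((zMultiset μ.parts)⁻¹ * y ^ μ.parts.card)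
      = y * partitionZSum y (n - j) := by
  rw [partitionZSum, Finset.mul_sum, ← Finset.sum_filter_of_ne (p := fun μ => j ∈ μ.parts)
    fun μ _ h => by_contra fun hjμ => h (by simp [Multiset.count_eq_zero_of_notMem hjμ])]
  refine (Finset.sum_bij (fun ν _ => ν.insertPart hj hjn) (by simp [Nat.Partition.insertPart])
    (fun ν₁ _ ν₂ _ h =>
      Nat.Partition.ext ((Multiset.cons_inj_right j).1 (congrArg Nat.Partition.parts h)))
    (fun μ hμ => ?_) (fun ν _ => ?_)).symm
  · have hjμ := (Finset.mem_filter.1 hμ).2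
    refine ⟨⟨μ.parts.erase j, fun hi => μ.parts_pos (Multiset.mem_of_mem_erase hi), ?_⟩,
      Finset.mem_univ _, Nat.Partition.ext (Multiset.cons_erase hjμ)⟩
    have := congr(Multiset.sum $(Multiset.cons_erase hjμ))
    rw [Multiset.sum_cons, μ.parts_sum] at this
    omega
  · have hz := zMultiset_ne_zero fun _ hi => ν.parts_pos hi
    simp only [Nat.Partition.insertPart, Multiset.count_cons_self, Multiset.card_cons,
      zMultiset_cons, pow_succ]
    field_simp
    push_cast
    ring

lemma card_mul_partitionZSum (y : ℚ) (n : ℕ) :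
    n * partitionZSum y n = y * ∑ s ∈ Finset.range n, partitionZSum y s := by
  have hweight (μ : n.Partition) :
      (n : ℚ) = ∑ j ∈ Finset.range (n + 1), (j * μ.parts.count j : ℚ) := by
    exact_mod_cast μ.sum_range_mul_count.symm
  calc (n : ℚ) * partitionZSum y n
      = ∑ j ∈ Finset.range (n + 1), ∑ μ : n.Partition,
          j * μ.parts.count j * ((zMultiset μ.parts)⁻¹ * y ^ μ.parts.card) := by
        rw [partitionZSum, Finset.mul_sum, Finset.sum_comm]
        exact Finset.sum_congr rfl fun μ _ => by rw [hweight μ, Finset.sum_mul]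
    _ = ∑ j ∈ Finset.range n, y * partitionZSum y (n - 1 - j) := by
        rw [Finset.sum_range_succ']
        simp only [Nat.cast_zero, zero_mul, Finset.sum_const_zero, add_zero]
        refine Finset.sum_congr rfl fun j hj => ?_
        rw [sum_mul_count_mul_zInv_mul_pow y j.succ_pos (Finset.mem_range.1 hj),
          Nat.sub_sub, add_comm 1 j]
    _ = y * ∑ s ∈ Finset.range n, partitionZSum y s := by
        rw [← Finset.mul_sum, Finset.sum_range_reflect (partitionZSum y) n]

theorem partitionZSum_eq_multichoose (y : ℚ) (n : ℕ) :
    partitionZSum y n = Ring.multichoose y n := by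
  induction n using Nat.strong_induction_on with
  | _ n ih =>
    rcases n with _ | k
    · rw [partitionZSum_zero, Ring.multichoose_zero_right]
    · have hrec := card_mul_partitionZSum y (k + 1)
      rw [Finset.sum_congr rfl fun s hs => ih s (Finset.mem_range.1 hs),
        Ring.sum_range_succ_multichoose, ← Ring.succ_mul_multichoose_succ] at hrec
      have hk : ((k + 1 : ℕ) : ℚ) ≠ 0 := by positivity
      exact mul_left_cancel₀ hk (by exact_mod_cast hrec)

/-- The exponent vector of `p_s = ∏_{i ∈ s} p_i` in the model `ℚ[p₁, p₂, …]`. -/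
def partsExponent (s : Multiset ℕ) : {i : ℕ // 0 < i} →₀ ℕ :=
  (Multiset.toFinsupp s).comapDomain Subtype.val Subtype.val_injective.injOn

@[simp] lemma partsExponent_apply (s : Multiset ℕ) (i : {i : ℕ // 0 < i}) :
    partsExponent s i = s.count i.1 := rfl

lemma partsExponent_injective {n : ℕ} :
    Function.Injective fun μ : n.Partition => partsExponent μ.parts := by
  intro μ ν h
  ext i
  rcases Nat.eq_zero_or_pos i with rfl | hi
  · simp [Multiset.count_eq_zero_of_notMem fun h => (μ.parts_pos h).false,
      Multiset.count_eq_zero_of_notMem fun h => (ν.parts_pos h).false]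
  · simpa using DFunLike.congr_fun h ⟨i, hi⟩

lemma prod_map_Pgen {s : Multiset ℕ} (hs : ∀ i ∈ s, 0 < i) :
    (s.map Pgen).prod = MvPolynomial.monomial (partsExponent s) 1 := by
  induction s using Multiset.induction with
  | empty => simp [show partsExponent 0 = 0 by ext; simp]
  | cons j s ih =>
    have hj := hs j (Multiset.mem_cons_self _ _)
    have hexp : partsExponent (j ::ₘ s) = Finsupp.single ⟨j, hj⟩ 1 + partsExponent s := by
      ext ⟨i, hi⟩
      rcases eq_or_ne i j with rfl | hij
      · simp [add_comm]
      · simp [Multiset.count_cons_of_ne hij, hij.symm]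
    rw [Multiset.map_cons, Multiset.prod_cons, ih fun i hi => hs i (Multiset.mem_cons_of_mem hi),
      hexp, Pgen, dif_pos hj, MvPolynomial.X, MvPolynomial.monomial_mul, one_mul]

lemma pPart_eq_monomial {n : ℕ} (μ : n.Partition) :
    pPart μ = MvPolynomial.monomial (partsExponent μ.parts) 1 :=
  prod_map_Pgen fun _ hi => μ.parts_pos hi

lemma zMon_partsExponent {s : Multiset ℕ} (hs : ∀ i ∈ s, 0 < i) :
    zMon (partsExponent s) = zMultiset s := by
  refine Finset.prod_bij (fun i _ => i.1) (fun i hi => ?_) (fun _ _ _ _ => Subtype.ext)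
    (fun i hi => ?_) fun _ _ => rfl
  · simpa using (Finsupp.mem_support_iff.1 hi)
  · exact ⟨⟨i, hs i (Multiset.mem_toFinset.1 hi)⟩, by simpa using hi, rfl⟩

lemma hall_pPart_right (f : LambdaQ) {n : ℕ} (μ : n.Partition) :
    hall f (pPart μ) = f.coeff (partsExponent μ.parts) * zPart μ := by
  rw [hall, zPart_eq_zMultiset, ← zMon_partsExponent fun _ hi => μ.parts_pos hi]
  simp only [pPart_eq_monomial, MvPolynomial.coeff_monomial, mul_ite, mul_one, mul_zero,
    ite_mul, zero_mul, Finset.sum_ite_eq, MvPolynomial.mem_support_iff]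
  split_ifs with h
  · rfl
  · rw [not_not.1 h, zero_mul]

lemma coeff_Frk (r : ℕ) (k : ℤ) {n : ℕ} (μ : n.Partition) :
    (Frk r k n).coeff (partsExponent μ.parts)
      = k * ((zPart μ)⁻¹ * ((((r * n : ℤ) + k : ℤ) : ℚ)) ^ (μ.parts.card - 1)) := by
  simp only [Frk, MvPolynomial.coeff_smul, MvPolynomial.coeff_sum, pPart_eq_monomial,
    MvPolynomial.coeff_monomial, partsExponent_injective.eq_iff, smul_eq_mul, mul_ite, mul_one,
    mul_zero, Finset.sum_ite_eq', Finset.mem_univ, if_true]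

def hallRight (f : LambdaQ) : LambdaQ →ₗ[ℚ] ℚ where
  toFun := hall f
  map_add' g h := by
    simp only [hall, MvPolynomial.coeff_add, ← Finset.sum_add_distrib]
    exact Finset.sum_congr rfl fun _ _ => by ring
  map_smul' c g := by
    simp only [hall, MvPolynomial.coeff_smul, smul_eq_mul, RingHom.id_apply, Finset.mul_sum]
    exact Finset.sum_congr rfl fun _ _ => by ring

/-- The degree-`n` part of `Λ`, spanned by the `p_μ` with `μ ⊢ n`. -/
def pSpan (n : ℕ) : Submodule ℚ LambdaQ := Submodule.span ℚ (Set.range (pPart (n := n)))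

def evalPowerSums (x : ℚ) : LambdaQ →ₐ[ℚ] ℚ := MvPolynomial.aeval fun _ => x

lemma evalPowerSums_pPart (x : ℚ) {n : ℕ} (μ : n.Partition) :
    evalPowerSums x (pPart μ) = x ^ μ.parts.card := by
  have hPgen : ∀ j ∈ μ.parts, (evalPowerSums x ∘ Pgen) j = x := fun j hj => by
    simp [evalPowerSums, Pgen, μ.parts_pos hj]
  rw [pPart, map_multiset_prod, Multiset.map_map, Multiset.map_congr rfl hPgen,
    Multiset.map_const', Multiset.prod_replicate]

lemma hall_Frk_eq_of_mem_pSpan (r : ℕ) (k : ℤ) {n : ℕ} (hn : 0 < n)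
    (ha : (((r * n : ℤ) + k : ℤ) : ℚ) ≠ 0) {g : LambdaQ} (hg : g ∈ pSpan n) :
    hall (Frk r k n) g
      = k / (((r * n : ℤ) + k : ℤ) : ℚ) *
          evalPowerSums (((r * n : ℤ) + k : ℤ) : ℚ) g := by
  refine LinearMap.eqOn_span' (f := hallRight (Frk r k n))
    (g := (k / (((r * n : ℤ) + k : ℤ) : ℚ)) •
      (evalPowerSums (((r * n : ℤ) + k : ℤ) : ℚ)).toLinearMap) ?_ hg
  rintro _ ⟨μ, rfl⟩
  have hz := zMultiset_ne_zero fun _ hi => μ.parts_pos hi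
  simp only [hallRight, LinearMap.coe_mk, AddHom.coe_mk, hall_pPart_right, coeff_Frk,
    LinearMap.smul_apply, AlgHom.toLinearMap_apply, evalPowerSums_pPart, smul_eq_mul,
    zPart_eq_zMultiset, ← pow_sub_one_mul (μ.card_parts_ne_zero hn)]
  field_simp

lemma pPart_union {a b : ℕ} (μ : a.Partition) (ν : b.Partition) :
    pPart (μ.union ν) = pPart μ * pPart ν := by
  simp [pPart, Nat.Partition.union, Multiset.prod_add]

lemma pSpan_mul_le (a b : ℕ) : pSpan a * pSpan b ≤ pSpan (a + b) := by
  rw [pSpan, pSpan, Submodule.span_mul_span]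
  refine Submodule.span_mono ?_
  rintro _ ⟨_, ⟨μ, rfl⟩, _, ⟨ν, rfl⟩, rfl⟩
  exact ⟨μ.union ν, pPart_union μ ν⟩

lemma one_mem_pSpan_zero : (1 : LambdaQ) ∈ pSpan 0 :=
  Submodule.subset_span ⟨default, by simp [pPart]⟩

lemma prod_mem_pSpan {ι : Type*} (s : Finset ι) (lam : ι → ℕ) {f : ι → LambdaQ}
    (hf : ∀ i ∈ s, f i ∈ pSpan (lam i)) :
    ∏ i ∈ s, f i ∈ pSpan (∑ i ∈ s, lam i) := by
  induction s using Finset.cons_induction with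
  | empty => simpa using one_mem_pSpan_zero
  | cons i s hi ih =>
    rw [Finset.prod_cons, Finset.sum_cons]
    exact pSpan_mul_le _ _ (Submodule.mul_mem_mul (hf i (Finset.mem_cons_self i s))
      (ih fun j hj => hf j (Finset.mem_cons_of_mem hj)))

lemma Frk_mem_pSpan (r : ℕ) (k : ℤ) (n : ℕ) : Frk r k n ∈ pSpan n :=
  Submodule.smul_mem _ _ <| Submodule.sum_mem _ fun μ _ =>
    Submodule.smul_mem _ _ (Submodule.subset_span ⟨μ, rfl⟩)

lemma evalPowerSums_Frk (x : ℚ) (r : ℕ) (k : ℤ) {n : ℕ} (hn : 0 < n)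
    (hb : (((r * n : ℤ) + k : ℤ) : ℚ) ≠ 0) :
    evalPowerSums x (Frk r k n)
      = k / (((r * n : ℤ) + k : ℤ) : ℚ) *
          Ring.multichoose (x * (((r * n : ℤ) + k : ℤ) : ℚ)) n := by
  rw [← partitionZSum_eq_multichoose, partitionZSum, Frk, map_smul, map_sum, smul_eq_mul,
    Finset.mul_sum, Finset.mul_sum]
  refine Finset.sum_congr rfl fun μ _ => ?_
  rw [map_smul, evalPowerSums_pPart, smul_eq_mul, zPart_eq_zMultiset, mul_pow,
    ← pow_sub_one_mul (μ.card_parts_ne_zero hn) (((r * n : ℤ) + k : ℤ) : ℚ)]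
  field_simp

theorem stmt18_general (n m : ℕ) (hn : 0 < n)
    (lam : Fin m → ℕ) (hlam : ∀ i, 0 < lam i)
    (hsum : ∑ i, lam i = n)
    (r : ℕ) (rs : Fin m → ℕ)
    (k : ℤ) (ks : Fin m → ℤ)
    (hk : ((r * n : ℤ) + k) ≠ 0) (hks : ∀ i, ((rs i * lam i : ℤ) + ks i) ≠ 0) :
    hall (Frk r k n) (∏ i, Frk (rs i) (ks i) (lam i))
      = ((k : ℚ) / (((r * n : ℤ) + k : ℤ) : ℚ)) *
        ∏ i, ((ks i : ℚ) / (((rs i * lam i : ℤ) + ks i : ℤ) : ℚ)) *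
          Ring.choose
            (((((r * n : ℤ) + k) * ((rs i * lam i : ℤ) + ks i) : ℤ) : ℚ) + lam i - 1)
            (lam i) := by
  have hprod : ∏ i, Frk (rs i) (ks i) (lam i) ∈ pSpan n :=
    hsum ▸ prod_mem_pSpan _ lam fun i _ => Frk_mem_pSpan (rs i) (ks i) (lam i)
  rw [hall_Frk_eq_of_mem_pSpan r k hn (Int.cast_ne_zero.2 hk) hprod, map_prod]
  congr 1
  refine Finset.prod_congr rfl fun i _ => ?_
  rw [evalPowerSums_Frk _ _ _ (hlam i) (Int.cast_ne_zero.2 (hks i)), Ring.multichoose_eq]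
  push_cast
  rfl

/-- The Hall scalar product
`⟨F_n^{(r,k)}, Π_i F_{λ_i}^{(r_i,k_i)}⟩
  = (k/(rn+k)) · Π_i (k_i/(r_iλ_i+k_i)) · binom((rn+k)(r_iλ_i+k_i)+λ_i-1, λ_i)`,
for a partition `λ = (λ₁, …, λ_m) ⊢ n`, positive integers `r, r_i`, and integers
`k, k_i` with nonzero denominators. -/
theorem stmt18 (n m : ℕ) (hn : 0 < n)
    (lam : Fin m → ℕ) (hlam : ∀ i, 0 < lam i) (hlam' : Antitone lam)
    (hsum : ∑ i, lam i = n)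
    (r : ℕ) (hr : 0 < r) (rs : Fin m → ℕ) (hrs : ∀ i, 0 < rs i)
    (k : ℤ) (ks : Fin m → ℤ)
    (hk : ((r * n : ℤ) + k) ≠ 0) (hks : ∀ i, ((rs i * lam i : ℤ) + ks i) ≠ 0) :
    hall (Frk r k n) (∏ i, Frk (rs i) (ks i) (lam i))
      = ((k : ℚ) / (((r * n : ℤ) + k : ℤ) : ℚ)) *
        ∏ i, ((ks i : ℚ) / (((rs i * lam i : ℤ) + ks i : ℤ) : ℚ)) *
          Ring.choose
            (((((r * n : ℤ) + k) * ((rs i * lam i : ℤ) + ks i) : ℤ) : ℚ) + lam i - 1)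
            (lam i) :=
  stmt18_general n m hn lam hlam hsum r rs k ks hk hks
end
end
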